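/- ELPAω_lp proves the sequent ⊢ ((halts(x¹·y¹))^L)^⊥, ∀u⁰∃v⁰ A_at(x, y, u, v), where A_at(x,y,u,v) is the quantifier-free formula (given via a closed characteristic term of EPAω) expressing that x(⟨u⟩ * ȳv) ≠₀ 0 and x(⟨u⟩ * ȳw) =₀ 0 for all w < v. -/

import Mathlib

namespace WR

/-- Finite types of `EPAω`: `o` is the type of natural numbers, `arr σ τ` is `σ → τ`. -/
inductive Ty : Type
  | o : Ty
  | arr : Ty → Ty → Ty
  deriving DecidableEq

notation "𝕆" => Ty.o
infixr:60 " ⤳ " => Ty.arr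

/-- The type `1` of number sequences. -/
abbrev Ty1 : Ty := 𝕆 ⤳ 𝕆
/-- The type of binary number functions. -/
abbrev Ty2 : Ty := 𝕆 ⤳ 𝕆 ⤳ 𝕆

/-- Hereditarily computable types: `comp 0 = 1`, `comp (ρ ⤳ τ) = comp ρ ⤳ comp τ`. -/
def Ty.comp : Ty → Ty
  | .o => Ty1
  | .arr ρ τ => .arr ρ.comp τ.comp

/-- Terms of `EPAω`: typed variables, zero, successor, projectors (K), combinators (S),
recursors (R), λ-abstraction and application. -/
inductive Tm : Ty → Type
  | var (n : ℕ) (τ : Ty) : Tm τ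
  | zero : Tm 𝕆
  | succ : Tm (𝕆 ⤳ 𝕆)
  | K (σ τ : Ty) : Tm (σ ⤳ τ ⤳ σ)
  | S (δ ρ τ : Ty) : Tm ((δ ⤳ ρ ⤳ τ) ⤳ (δ ⤳ ρ) ⤳ δ ⤳ τ)
  | R (τ : Ty) : Tm (τ ⤳ (𝕆 ⤳ τ ⤳ τ) ⤳ 𝕆 ⤳ τ)
  | lam {τ : Ty} (n : ℕ) (σ : Ty) : Tm τ → Tm (σ ⤳ τ)
  | app {σ τ : Ty} : Tm (σ ⤳ τ) → Tm σ → Tm τ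

/-- Free variables of a term (as (index, type) pairs). -/
def Tm.fvars : {τ : Ty} → Tm τ → Set (ℕ × Ty)
  | _, .var m ρ => {(m, ρ)}
  | _, .zero => ∅
  | _, .succ => ∅
  | _, .K _ _ => ∅
  | _, .S _ _ _ => ∅
  | _, .R _ => ∅
  | _, .lam m ρ t => Tm.fvars t \ {(m, ρ)}
  | _, .app f a => Tm.fvars f ∪ Tm.fvars a

/-- A term is closed if it has no free variables. -/
def Tm.Closed {τ : Ty} (t : Tm τ) : Prop := t.fvars = ∅

/-- A strict upper bound for all (free or bound) variable indices occurring in a term. -/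
def Tm.maxVar : {τ : Ty} → Tm τ → ℕ
  | _, .var m _ => m + 1
  | _, .zero => 0
  | _, .succ => 0
  | _, .K _ _ => 0
  | _, .S _ _ _ => 0
  | _, .R _ => 0
  | _, .lam m _ t => max (m + 1) (Tm.maxVar t)
  | _, .app f a => max (Tm.maxVar f) (Tm.maxVar a)

/-- Substitution of the term `s` for the variable `(n, σ)` in a term (naive). -/
def Tm.subst : {τ : Ty} → Tm τ → ℕ → {σ : Ty} → Tm σ → Tm τ
  | _, .var m ρ, n, σ, s =>
      if h : m = n ∧ ρ = σ then (by rw [h.2]; exact s) else .var m ρ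
  | _, .zero, _, _, _ => .zero
  | _, .succ, _, _, _ => .succ
  | _, .K σ' τ', _, _, _ => .K σ' τ'
  | _, .S δ ρ τ', _, _, _ => .S δ ρ τ'
  | _, .R τ', _, _, _ => .R τ'
  | _, .lam m ρ t, n, σ, s =>
      if m = n ∧ ρ = σ then .lam m ρ t else .lam m ρ (Tm.subst t n s)
  | _, .app f a, n, _, s => .app (Tm.subst f n s) (Tm.subst a n s)

/-- `s` is free for the variable `(n, σ)` in the term `t`:
no free occurrence of the variable lies in the scope of a binder capturing a
free variable of `s`. -/
def Tm.FreeForIn {σ : Ty} (s : Tm σ) (n : ℕ) : {τ : Ty} → Tm τ → Prop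
  | _, .lam m ρ t =>
      ((n, σ) ∉ Tm.fvars t) ∨ (m = n ∧ ρ = σ) ∨
        (((m, ρ) ∉ s.fvars) ∧ Tm.FreeForIn s n t)
  | _, .app f a => Tm.FreeForIn s n f ∧ Tm.FreeForIn s n a
  | _, _ => True

/-- Variable of type `0`. -/
abbrev v0 (n : ℕ) : Tm 𝕆 := .var n 𝕆
/-- The numeral `1`. -/
def tm1 : Tm 𝕆 := Tm.app Tm.succ Tm.zero

/-- Recursion at type `0`. -/
def recO (y : Tm 𝕆) (z : Tm (𝕆 ⤳ 𝕆 ⤳ 𝕆)) (n : Tm 𝕆) : Tm 𝕆 :=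
  (((Tm.R 𝕆).app y).app z).app n

/-- Addition: `addT a b = a + b`. -/
def addT : Tm Ty2 :=
  .lam 0 𝕆 (.lam 1 𝕆 (recO (v0 0) (.lam 2 𝕆 (.lam 3 𝕆 (Tm.succ.app (v0 3)))) (v0 1)))

/-- Predecessor (with `pred 0 = 0`). -/
def predT : Tm Ty1 :=
  .lam 0 𝕆 (recO .zero (.lam 1 𝕆 (.lam 2 𝕆 (v0 1))) (v0 0))

/-- `condT c a b` equals `a` if `c = 0` and `b` otherwise. -/
def condT : Tm (𝕆 ⤳ 𝕆 ⤳ 𝕆 ⤳ 𝕆) :=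
  .lam 0 𝕆 (.lam 1 𝕆 (.lam 2 𝕆 (recO (v0 1) (.lam 3 𝕆 (.lam 4 𝕆 (v0 2))) (v0 0))))

/-- Cut-off subtraction `a ∸ b`. -/
def monusT : Tm Ty2 :=
  .lam 0 𝕆 (.lam 1 𝕆 (recO (v0 0) (.lam 2 𝕆 (.lam 3 𝕆 (predT.app (v0 3)))) (v0 1)))

/-- Triangular numbers `tri n = 0 + 1 + ⋯ + n`. -/
def triT : Tm Ty1 :=
  .lam 0 𝕆 (recO .zero
    (.lam 1 𝕆 (.lam 2 𝕆 ((addT.app (v0 2)).app (Tm.succ.app (v0 1))))) (v0 0))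

/-- Cantor pairing `j x y = tri (x + y) + y` (injective). -/
def pairT : Tm Ty2 :=
  .lam 0 𝕆 (.lam 1 𝕆
    ((addT.app (triT.app ((addT.app (v0 0)).app (v0 1)))).app (v0 1)))

/-- Signum: `sg 0 = 0`, `sg (n+1) = 1`. -/
def sgT : Tm Ty1 :=
  .lam 0 𝕆 (recO .zero (.lam 1 𝕆 (.lam 2 𝕆 tm1)) (v0 0))

/-- Pointwise pairing of two sequences: `pwPairT u y = λk. j (u k) (y k)`. -/
def pwPairT : Tm (Ty1 ⤳ Ty1 ⤳ Ty1) :=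
  .lam 0 Ty1 (.lam 1 Ty1 (.lam 2 𝕆
    ((pairT.app ((Tm.var 0 Ty1).app (v0 2))).app ((Tm.var 1 Ty1).app (v0 2)))))

/-- `seqCodeT z u v` is the code of the finite sequence `⟨u⟩ * z̄v = (u, z 0, …, z (v-1))`
(coded by iterated injective pairing). -/
def seqCodeT : Tm (Ty1 ⤳ 𝕆 ⤳ 𝕆 ⤳ 𝕆) :=
  .lam 0 Ty1 (.lam 1 𝕆 (.lam 2 𝕆
    (recO (Tm.succ.app ((pairT.app (v0 1)).app .zero))
      (.lam 3 𝕆 (.lam 4 𝕆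
        (Tm.succ.app ((pairT.app ((Tm.var 0 Ty1).app (v0 3))).app (v0 4)))))
      (v0 2))))

/-- `initCodeT z v` is the code of the finite sequence `z̄v = (z 0, …, z (v-1))`. -/
def initCodeT : Tm (Ty1 ⤳ 𝕆 ⤳ 𝕆) :=
  .lam 0 Ty1 (.lam 1 𝕆
    (recO .zero
      (.lam 2 𝕆 (.lam 3 𝕆
        (Tm.succ.app ((pairT.app ((Tm.var 0 Ty1).app (v0 2))).app (v0 3)))))
      (v0 1)))

/-- Formulas of (classical) `EPAω`. The only atomic predicate is equality at type `0`.-/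
inductive CForm : Type
  | eq : Tm 𝕆 → Tm 𝕆 → CForm
  | not : CForm → CForm
  | and : CForm → CForm → CForm
  | or : CForm → CForm → CForm
  | imp : CForm → CForm → CForm
  | all : ℕ → Ty → CForm → CForm
  | ex : ℕ → Ty → CForm → CForm

/-- Free variables of a classical formula. -/
def CForm.fvars : CForm → Set (ℕ × Ty)
  | .eq s t => s.fvars ∪ t.fvars
  | .not A => A.fvars
  | .and A B => A.fvars ∪ B.fvars
  | .or A B => A.fvars ∪ B.fvars
  | .imp A B => A.fvars ∪ B.fvars
  | .all n τ A => A.fvars \ {(n, τ)}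
  | .ex n τ A => A.fvars \ {(n, τ)}

/-- Substitution of a term for a variable in a classical formula (naive). -/
def CForm.substTm (A : CForm) (n : ℕ) {σ : Ty} (s : Tm σ) : CForm :=
  match A with
  | .eq a b => .eq (a.subst n s) (b.subst n s)
  | .not A => .not (A.substTm n s)
  | .and A B => .and (A.substTm n s) (B.substTm n s)
  | .or A B => .or (A.substTm n s) (B.substTm n s)
  | .imp A B => .imp (A.substTm n s) (B.substTm n s)
  | .all m τ A => if m = n ∧ τ = σ then .all m τ A else .all m τ (A.substTm n s)
  | .ex m τ A => if m = n ∧ τ = σ then .ex m τ A else .ex m τ (A.substTm n s)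

/-- `s` is free for the variable `(n, σ)` in the classical formula `A`. -/
def CForm.FreeFor {σ : Ty} (s : Tm σ) (n : ℕ) : CForm → Prop
  | .eq _ _ => True
  | .not A => CForm.FreeFor s n A
  | .and A B => CForm.FreeFor s n A ∧ CForm.FreeFor s n B
  | .or A B => CForm.FreeFor s n A ∧ CForm.FreeFor s n B
  | .imp A B => CForm.FreeFor s n A ∧ CForm.FreeFor s n B
  | .all m τ A =>
      ((n, σ) ∉ (A.fvars \ {(m, τ)})) ∨ (((m, τ) ∉ s.fvars) ∧ CForm.FreeFor s n A)
  | .ex m τ A =>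
      ((n, σ) ∉ (A.fvars \ {(m, τ)})) ∨ (((m, τ) ∉ s.fvars) ∧ CForm.FreeFor s n A)

/-- Quantifier-free classical formulas. -/
def CForm.qf : CForm → Prop
  | .eq _ _ => True
  | .not A => A.qf
  | .and A B => A.qf ∧ B.qf
  | .or A B => A.qf ∧ B.qf
  | .imp A B => A.qf ∧ B.qf
  | .all _ _ _ => False
  | .ex _ _ _ => False

/-- Higher-type equality as an abbreviation: `s =_{ρ ⤳ τ} t :≡ ∀x (s x =_τ t x)`. -/
def eqAt : (τ : Ty) → Tm τ → Tm τ → CForm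
  | 𝕆, s, t => .eq s t
  | .arr σ τ, s, t =>
      let n := max s.maxVar t.maxVar
      .all n σ (eqAt τ (s.app (.var n σ)) (t.app (.var n σ)))

/-- `s ≠₀ t`. -/
def neqF (s t : Tm 𝕆) : CForm := .not (.eq s t)
/-- Classical bi-implication. -/
def iffC (A B : CForm) : CForm := (A.imp B).and (B.imp A)

/-- `s <₀ t` expressed as `∃k (s + (k+1) = t)`. -/
def ltF (s t : Tm 𝕆) : CForm :=
  let k := max s.maxVar t.maxVar
  .ex k 𝕆 (.eq ((addT.app s).app (Tm.app Tm.succ (v0 k))) t)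

/-- `s ≤₀ t` expressed as `∃k (s + k = t)`. -/
def leF (s t : Tm 𝕆) : CForm :=
  let k := max s.maxVar t.maxVar
  .ex k 𝕆 (.eq ((addT.app s).app (v0 k)) t)

/-- The axioms of `EPAω`: equality axioms, successor axioms, defining equations for the
projectors, combinators, recursors and λ-abstraction, extensionality and full induction. -/
inductive EPAAx : CForm → Prop
  | eqRefl (n : ℕ) : EPAAx (.eq (v0 n) (v0 n))
  | eqSym (n m : ℕ) :
      EPAAx ((CForm.eq (v0 n) (v0 m)).imp (.eq (v0 m) (v0 n)))
  | eqTrans (n m k : ℕ) :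
      EPAAx (((CForm.eq (v0 n) (v0 m)).and (.eq (v0 m) (v0 k))).imp (.eq (v0 n) (v0 k)))
  | eqSub (A : CForm) (z x y : ℕ)
      (hx : CForm.FreeFor (v0 x) z A) (hy : CForm.FreeFor (v0 y) z A) :
      EPAAx ((CForm.eq (v0 x) (v0 y)).imp
        ((A.substTm z (v0 x)).imp (A.substTm z (v0 y))))
  | succInj (n m : ℕ) :
      EPAAx ((CForm.eq (Tm.app Tm.succ (v0 n)) (Tm.app Tm.succ (v0 m))).imp
        (.eq (v0 n) (v0 m)))
  | succNeZero (n : ℕ) : EPAAx (.not (.eq (Tm.app Tm.succ (v0 n)) .zero))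
  | axK {σ τ : Ty} (a : Tm σ) (b : Tm τ) :
      EPAAx (eqAt σ (((Tm.K σ τ).app a).app b) a)
  | axS {δ ρ τ : Ty} (x : Tm (δ ⤳ ρ ⤳ τ)) (y : Tm (δ ⤳ ρ)) (z : Tm δ) :
      EPAAx (eqAt τ ((((Tm.S δ ρ τ).app x).app y).app z) ((x.app z).app (y.app z)))
  | axR0 {τ : Ty} (y : Tm τ) (z : Tm (𝕆 ⤳ τ ⤳ τ)) :
      EPAAx (eqAt τ ((((Tm.R τ).app y).app z).app .zero) y)
  | axRS {τ : Ty} (y : Tm τ) (z : Tm (𝕆 ⤳ τ ⤳ τ)) (n : Tm 𝕆) :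
      EPAAx (eqAt τ ((((Tm.R τ).app y).app z).app (Tm.app Tm.succ n))
        ((z.app n).app ((((Tm.R τ).app y).app z).app n)))
  | axBeta {σ τ : Ty} (n : ℕ) (t : Tm τ) (s : Tm σ) (h : s.FreeForIn n t) :
      EPAAx (eqAt τ ((Tm.lam n σ t).app s) (t.subst n s))
  | axExt {ρ τ : Ty} (nz nx ny : ℕ) :
      EPAAx ((eqAt ρ (.var nx ρ) (.var ny ρ)).imp
        (eqAt τ ((Tm.var nz (ρ ⤳ τ)).app (.var nx ρ)) ((Tm.var nz (ρ ⤳ τ)).app (.var ny ρ))))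
  | axInd (A : CForm) (n : ℕ)
      (h : CForm.FreeFor (Tm.app Tm.succ (v0 n)) n A) :
      EPAAx (((A.substTm n (Tm.zero)).and
        (.all n 𝕆 (A.imp (A.substTm n (Tm.app Tm.succ (v0 n)))))).imp (.all n 𝕆 A))

/-- `EPAω`'s axioms as a set of formulas. -/
def EPA : Set CForm := fun A => EPAAx A

/-- The quantifier-free axiom of choice `QF-AC⁰⁰`. -/
inductive QFAC : CForm → Prop
  | mk (A : CForm) (x y Y : ℕ) (hqf : A.qf) (hxy : x ≠ y)
      (hY : (Y, Ty1) ∉ A.fvars)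
      (hff : CForm.FreeFor ((Tm.var Y Ty1).app (v0 x)) y A) :
      QFAC ((CForm.all x 𝕆 (.ex y 𝕆 A)).imp
        (.ex Y Ty1 (.all x 𝕆 (A.substTm y ((Tm.var Y Ty1).app (v0 x))))))

/-- `QF-AC⁰⁰` as a set of formulas. -/
def QFA : Set CForm := fun A => QFAC A

/-- Gentzen-style two-sided sequent calculus for classical logic over `Tm`,
with axioms from the set `Ax`. `CProof Ax Γ Δ` means `Γ ⊢ Δ` is derivable. -/
inductive CProof (Ax : Set CForm) : List CForm → List CForm → Prop
  | ax {A} (h : A ∈ Ax) : CProof Ax [] [A]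
  | id (A) : CProof Ax [A] [A]
  | cut {Γ Δ Γ' Δ' A} :
      CProof Ax Γ (A :: Δ) → CProof Ax (A :: Γ') Δ' → CProof Ax (Γ ++ Γ') (Δ ++ Δ')
  | permL {Γ Γ' Δ} : CProof Ax Γ Δ → Γ.Perm Γ' → CProof Ax Γ' Δ
  | permR {Γ Δ Δ'} : CProof Ax Γ Δ → Δ.Perm Δ' → CProof Ax Γ Δ'
  | wkL {Γ Δ} (A) : CProof Ax Γ Δ → CProof Ax (A :: Γ) Δ
  | wkR {Γ Δ} (A) : CProof Ax Γ Δ → CProof Ax Γ (A :: Δ)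
  | conL {Γ Δ A} : CProof Ax (A :: A :: Γ) Δ → CProof Ax (A :: Γ) Δ
  | conR {Γ Δ A} : CProof Ax Γ (A :: A :: Δ) → CProof Ax Γ (A :: Δ)
  | notL {Γ Δ A} : CProof Ax Γ (A :: Δ) → CProof Ax (CForm.not A :: Γ) Δ
  | notR {Γ Δ A} : CProof Ax (A :: Γ) Δ → CProof Ax Γ (CForm.not A :: Δ)
  | andL {Γ Δ A B} : CProof Ax (A :: B :: Γ) Δ → CProof Ax ((CForm.and A B) :: Γ) Δ
  | andR {Γ Δ A B} :
      CProof Ax Γ (A :: Δ) → CProof Ax Γ (B :: Δ) → CProof Ax Γ ((CForm.and A B) :: Δ)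
  | orL {Γ Δ A B} :
      CProof Ax (A :: Γ) Δ → CProof Ax (B :: Γ) Δ → CProof Ax ((CForm.or A B) :: Γ) Δ
  | orR {Γ Δ A B} : CProof Ax Γ (A :: B :: Δ) → CProof Ax Γ ((CForm.or A B) :: Δ)
  | impL {Γ Δ A B} :
      CProof Ax Γ (A :: Δ) → CProof Ax (B :: Γ) Δ → CProof Ax ((CForm.imp A B) :: Γ) Δ
  | impR {Γ Δ A B} : CProof Ax (A :: Γ) (B :: Δ) → CProof Ax Γ ((CForm.imp A B) :: Δ)
  | allL {Γ Δ A n σ} (t : Tm σ) (hff : CForm.FreeFor t n A) :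
      CProof Ax ((A.substTm n t) :: Γ) Δ → CProof Ax ((CForm.all n σ A) :: Γ) Δ
  | allR {Γ Δ A n σ}
      (hfr : ∀ B ∈ Γ, (n, σ) ∉ CForm.fvars B) (hfr' : ∀ B ∈ Δ, (n, σ) ∉ CForm.fvars B) :
      CProof Ax Γ (A :: Δ) → CProof Ax Γ ((CForm.all n σ A) :: Δ)
  | exL {Γ Δ A n σ}
      (hfr : ∀ B ∈ Γ, (n, σ) ∉ CForm.fvars B) (hfr' : ∀ B ∈ Δ, (n, σ) ∉ CForm.fvars B) :
      CProof Ax (A :: Γ) Δ → CProof Ax ((CForm.ex n σ A) :: Γ) Δ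
  | exR {Γ Δ A n σ} (t : Tm σ) (hff : CForm.FreeFor t n A) :
      CProof Ax Γ ((A.substTm n t) :: Δ) → CProof Ax Γ ((CForm.ex n σ A) :: Δ)

/-- Formulas of the linear calculi `ELPAω_lp` / `ELPAω_eq` (in negation normal form,
with dual pairs of atoms). `ph`/`nph` is a placeholder (and its dual). -/
inductive LForm : Type
  | one : LForm
  | zer : LForm
  | top : LForm
  | bot : LForm
  | eq : Tm 𝕆 → Tm 𝕆 → LForm
  | neq : Tm 𝕆 → Tm 𝕆 → LForm
  | lp : (τ : Ty) → Tm τ → LForm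
  | nlp : (τ : Ty) → Tm τ → LForm
  | deq : Tm 𝕆 → Tm 𝕆 → LForm
  | ndeq : Tm 𝕆 → Tm 𝕆 → LForm
  | tag : Tm 𝕆 → LForm
  | ntag : Tm 𝕆 → LForm
  | ph : LForm
  | nph : LForm
  | tensor : LForm → LForm → LForm
  | par : LForm → LForm → LForm
  | oplus : LForm → LForm → LForm
  | withC : LForm → LForm → LForm
  | bang : LForm → LForm
  | quest : LForm → LForm
  | all : ℕ → Ty → LForm → LForm
  | ex : ℕ → Ty → LForm → LForm

/-- Linear negation `A^⊥` (an involution, by De Morgan duality). -/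
def LForm.neg : LForm → LForm
  | .one => .bot
  | .bot => .one
  | .zer => .top
  | .top => .zer
  | .eq s t => .neq s t
  | .neq s t => .eq s t
  | .lp τ t => .nlp τ t
  | .nlp τ t => .lp τ t
  | .deq s t => .ndeq s t
  | .ndeq s t => .deq s t
  | .tag t => .ntag t
  | .ntag t => .tag t
  | .ph => .nph
  | .nph => .ph
  | .tensor A B => .par A.neg B.neg
  | .par A B => .tensor A.neg B.neg
  | .oplus A B => .withC A.neg B.neg
  | .withC A B => .oplus A.neg B.neg
  | .bang A => .quest A.neg
  | .quest A => .bang A.neg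
  | .all n τ A => .ex n τ A.neg
  | .ex n τ A => .all n τ A.neg

/-- Linear implication `A ⊸ B :≡ A^⊥ ⅋ B`. -/
def LForm.limp (A B : LForm) : LForm := .par A.neg B

/-- Free variables of a linear formula. -/
def LForm.fvars : LForm → Set (ℕ × Ty)
  | .eq s t => s.fvars ∪ t.fvars
  | .neq s t => s.fvars ∪ t.fvars
  | .deq s t => s.fvars ∪ t.fvars
  | .ndeq s t => s.fvars ∪ t.fvars
  | .lp _ t => t.fvars
  | .nlp _ t => t.fvars
  | .tag t => t.fvars
  | .ntag t => t.fvars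
  | .tensor A B => A.fvars ∪ B.fvars
  | .par A B => A.fvars ∪ B.fvars
  | .oplus A B => A.fvars ∪ B.fvars
  | .withC A B => A.fvars ∪ B.fvars
  | .bang A => A.fvars
  | .quest A => A.fvars
  | .all n τ A => A.fvars \ {(n, τ)}
  | .ex n τ A => A.fvars \ {(n, τ)}
  | _ => ∅

/-- A strict upper bound for all variable indices occurring in a linear formula. -/
def LForm.maxVar : LForm → ℕ
  | .eq s t => max s.maxVar t.maxVar
  | .neq s t => max s.maxVar t.maxVar
  | .deq s t => max s.maxVar t.maxVar
  | .ndeq s t => max s.maxVar t.maxVar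
  | .lp _ t => t.maxVar
  | .nlp _ t => t.maxVar
  | .tag t => t.maxVar
  | .ntag t => t.maxVar
  | .tensor A B => max A.maxVar B.maxVar
  | .par A B => max A.maxVar B.maxVar
  | .oplus A B => max A.maxVar B.maxVar
  | .withC A B => max A.maxVar B.maxVar
  | .bang A => A.maxVar
  | .quest A => A.maxVar
  | .all n _ A => max (n + 1) A.maxVar
  | .ex n _ A => max (n + 1) A.maxVar
  | _ => 0

/-- Substitution of a term for a variable in a linear formula (naive). -/
def LForm.substTm (A : LForm) (n : ℕ) {σ : Ty} (s : Tm σ) : LForm :=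
  match A with
  | .eq a b => .eq (a.subst n s) (b.subst n s)
  | .neq a b => .neq (a.subst n s) (b.subst n s)
  | .deq a b => .deq (a.subst n s) (b.subst n s)
  | .ndeq a b => .ndeq (a.subst n s) (b.subst n s)
  | .lp τ t => .lp τ (t.subst n s)
  | .nlp τ t => .nlp τ (t.subst n s)
  | .tag t => .tag (t.subst n s)
  | .ntag t => .ntag (t.subst n s)
  | .tensor A B => .tensor (A.substTm n s) (B.substTm n s)
  | .par A B => .par (A.substTm n s) (B.substTm n s)
  | .oplus A B => .oplus (A.substTm n s) (B.substTm n s)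
  | .withC A B => .withC (A.substTm n s) (B.substTm n s)
  | .bang A => .bang (A.substTm n s)
  | .quest A => .quest (A.substTm n s)
  | .all m τ A => if m = n ∧ τ = σ then .all m τ A else .all m τ (A.substTm n s)
  | .ex m τ A => if m = n ∧ τ = σ then .ex m τ A else .ex m τ (A.substTm n s)
  | B => B

/-- `s` is free for the variable `(n, σ)` in the linear formula `A`. -/
def LForm.FreeFor {σ : Ty} (s : Tm σ) (n : ℕ) : LForm → Prop
  | .tensor A B => LForm.FreeFor s n A ∧ LForm.FreeFor s n B
  | .par A B => LForm.FreeFor s n A ∧ LForm.FreeFor s n B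
  | .oplus A B => LForm.FreeFor s n A ∧ LForm.FreeFor s n B
  | .withC A B => LForm.FreeFor s n A ∧ LForm.FreeFor s n B
  | .bang A => LForm.FreeFor s n A
  | .quest A => LForm.FreeFor s n A
  | .all m τ A =>
      ((n, σ) ∉ (A.fvars \ {(m, τ)})) ∨ (((m, τ) ∉ s.fvars) ∧ LForm.FreeFor s n A)
  | .ex m τ A =>
      ((n, σ) ∉ (A.fvars \ {(m, τ)})) ∨ (((m, τ) ∉ s.fvars) ∧ LForm.FreeFor s n A)
  | _ => True

/-- Nonlinear formulas: those containing no `⊕`, `&` and no linear predicate. -/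
def LForm.Nonlinear : LForm → Prop
  | .oplus _ _ => False
  | .withC _ _ => False
  | .lp _ _ => False
  | .nlp _ _ => False
  | .tensor A B => A.Nonlinear ∧ B.Nonlinear
  | .par A B => A.Nonlinear ∧ B.Nonlinear
  | .bang A => A.Nonlinear
  | .quest A => A.Nonlinear
  | .all _ _ A => A.Nonlinear
  | .ex _ _ A => A.Nonlinear
  | _ => True

/-- Formulas containing neither dot-equality nor the tagging predicate. -/
def LForm.NoDotTag : LForm → Prop
  | .deq _ _ => False
  | .ndeq _ _ => False
  | .tag _ => False
  | .ntag _ => False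
  | .tensor A B => A.NoDotTag ∧ B.NoDotTag
  | .par A B => A.NoDotTag ∧ B.NoDotTag
  | .oplus A B => A.NoDotTag ∧ B.NoDotTag
  | .withC A B => A.NoDotTag ∧ B.NoDotTag
  | .bang A => A.NoDotTag
  | .quest A => A.NoDotTag
  | .all _ _ A => A.NoDotTag
  | .ex _ _ A => A.NoDotTag
  | _ => True

/-- The Girard embedding `A ↦ A^L` of classical formulas into linear logic:
`∧ ↦ ⊗`, `∨ ↦ ⅋`, `¬ ↦ (·)^⊥`, `→ ↦ ⊸`. -/
def CForm.emb : CForm → LForm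
  | .eq s t => .eq s t
  | .not A => A.emb.neg
  | .and A B => .tensor A.emb B.emb
  | .or A B => .par A.emb B.emb
  | .imp A B => .par A.emb.neg B.emb
  | .all n τ A => .all n τ A.emb
  | .ex n τ A => .ex n τ A.emb

/-- Higher-type linear equality: `s =_{ρ ⤳ τ} t :≡ ∀x (s x =_τ t x)`. -/
def leqAt : (τ : Ty) → Tm τ → Tm τ → LForm
  | 𝕆, s, t => .eq s t
  | .arr σ τ, s, t =>
      let n := max s.maxVar t.maxVar
      .all n σ (leqAt τ (s.app (.var n σ)) (t.app (.var n σ)))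

/-- Higher-type dot-equality: `s ≐_{ρ ⤳ τ} t :≡ ∀x (s x ≐_τ t x)`. -/
def deqAt : (τ : Ty) → Tm τ → Tm τ → LForm
  | 𝕆, s, t => .deq s t
  | .arr σ τ, s, t =>
      let n := max s.maxVar t.maxVar
      .all n σ (deqAt τ (s.app (.var n σ)) (t.app (.var n σ)))

/-- Left part of the linear axiom of choice `(lAC)`:
`(∀x⁰ ∃y⁰ α x y =₀ 0)^⊥`. -/
def lACleft (a x y : ℕ) : LForm :=
  (LForm.all x 𝕆 (.ex y 𝕆
    (.eq (((Tm.var a Ty2).app (v0 x)).app (v0 y)) .zero))).neg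

/-- Right part of the linear axiom of choice `(lAC)`:
`∃Y¹ (∀x⁰ (α x (Y x) =₀ 0) ⊗ !(lp(α) ⊸ lp(Y)))`. -/
def lACright (a Y x : ℕ) : LForm :=
  .ex Y Ty1 ((LForm.all x 𝕆
      (.eq (((Tm.var a Ty2).app (v0 x)).app ((Tm.var Y Ty1).app (v0 x))) .zero)).tensor
    (.bang ((LForm.lp Ty2 (.var a Ty2)).limp (.lp Ty1 (.var Y Ty1)))))

/-- One-sided sequent calculus for the linear systems. `LProof affine eqc Ax Γ` means
that the sequent `⊢ Γ` is derivable, where: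
* `affine = true` adds unrestricted weakening `(w)` (the affine calculi `EAPAω`),
* `eqc = true` adds the dot-equality/tagging rules of the `_eq` calculi and restricts
  `(!₂)` to nonlinear formulas without `≐`/`□`,
* `Ax` is a set of classical formulas whose Girard embeddings are available as axioms
  (the embedded `EPAω` axioms plus possibly further formulas `Γ^L`). -/
inductive LProof (affine eqc : Bool) (Ax : Set CForm) : List LForm → Prop
  | fromAx {A} (h : A ∈ Ax) : LProof affine eqc Ax [A.emb]
  | id (A : LForm) : LProof affine eqc Ax [A, A.neg]
  | cut {Γ Δ A} :
      LProof affine eqc Ax (A :: Γ) → LProof affine eqc Ax (A.neg :: Δ) →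
      LProof affine eqc Ax (Γ ++ Δ)
  | perm {Γ Γ'} : LProof affine eqc Ax Γ → Γ.Perm Γ' → LProof affine eqc Ax Γ'
  | tensor {Γ Δ A B} :
      LProof affine eqc Ax (A :: Γ) → LProof affine eqc Ax (B :: Δ) →
      LProof affine eqc Ax ((LForm.tensor A B) :: Γ ++ Δ)
  | par {Γ A B} :
      LProof affine eqc Ax (A :: B :: Γ) → LProof affine eqc Ax ((LForm.par A B) :: Γ)
  | one : LProof affine eqc Ax [.one]
  | botR {Γ} : LProof affine eqc Ax Γ → LProof affine eqc Ax (.bot :: Γ)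
  | withR {Γ A B} :
      LProof affine eqc Ax (A :: Γ) → LProof affine eqc Ax (B :: Γ) →
      LProof affine eqc Ax ((LForm.withC A B) :: Γ)
  | top {Γ} : LProof affine eqc Ax (.top :: Γ)
  | oplus1 {Γ A B} : LProof affine eqc Ax (A :: Γ) →
      LProof affine eqc Ax ((LForm.oplus A B) :: Γ)
  | oplus2 {Γ A B} : LProof affine eqc Ax (B :: Γ) →
      LProof affine eqc Ax ((LForm.oplus A B) :: Γ)
  | bangR {Γ A} (h : ∀ B ∈ Γ, ∃ C, B = LForm.quest C) :
      LProof affine eqc Ax (A :: Γ) → LProof affine eqc Ax ((LForm.bang A) :: Γ)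
  | der {Γ A} : LProof affine eqc Ax (A :: Γ) →
      LProof affine eqc Ax ((LForm.quest A) :: Γ)
  | wkq {Γ} (A) : LProof affine eqc Ax Γ → LProof affine eqc Ax ((LForm.quest A) :: Γ)
  | conq {Γ A} :
      LProof affine eqc Ax (LForm.quest A :: LForm.quest A :: Γ) →
      LProof affine eqc Ax (LForm.quest A :: Γ)
  | allR {Γ A n σ} (h : ∀ B ∈ Γ, (n, σ) ∉ LForm.fvars B) :
      LProof affine eqc Ax (A :: Γ) → LProof affine eqc Ax ((LForm.all n σ A) :: Γ)
  | exR {Γ A n σ} (t : Tm σ) (hff : LForm.FreeFor t n A) :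
      LProof affine eqc Ax ((A.substTm n t) :: Γ) →
      LProof affine eqc Ax ((LForm.ex n σ A) :: Γ)
  -- axioms and rules for the linear predicate
  | lpAx {τ} (t : Tm τ) (h : t.Closed) : LProof affine eqc Ax [.lp τ t]
  | bang2 {A} (h : A.Nonlinear) (h2 : eqc = true → A.NoDotTag) :
      LProof affine eqc Ax [A.neg, .bang A]
  | lpCon {Γ τ t} :
      LProof affine eqc Ax (LForm.nlp τ t :: LForm.nlp τ t :: Γ) →
      LProof affine eqc Ax (LForm.nlp τ t :: Γ)
  | lpApp {ρ τ} (t : Tm (ρ ⤳ τ)) (r : Tm ρ) :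
      LProof affine eqc Ax [.nlp (ρ ⤳ τ) t, .nlp ρ r, .lp τ (t.app r)]
  | lAC (a Y x y : ℕ) (hxy : x ≠ y) :
      LProof affine eqc Ax [lACleft a x y, lACright a Y x]
  -- unrestricted weakening for the affine calculi
  | wk {Γ} (A) (h : affine = true) : LProof affine eqc Ax Γ →
      LProof affine eqc Ax (A :: Γ)
  -- rules of the `_eq` calculi
  | dotSucc (n : ℕ) (h : eqc = true) :
      LProof affine eqc Ax [.bang (.ndeq (Tm.app Tm.succ (v0 n)) .zero)]
  | dotEq1 {τ} {s t : Tm τ} (h : eqc = true) :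
      LProof affine eqc Ax [leqAt τ s t] → LProof affine eqc Ax [.bang (deqAt τ s t)]
  | dotEq2 (k : ℕ) (h : eqc = true) :
      LProof affine eqc Ax
        [(LForm.bang (.ndeq (v0 k) .zero)).neg, .bang (.deq (sgT.app (v0 k)) tm1)]
  | dotSub {τ} (x y z : ℕ) (A : LForm) (h : eqc = true)
      (hfx : LForm.FreeFor (Tm.var x τ) z A) (hfy : LForm.FreeFor (Tm.var y τ) z A) :
      LProof affine eqc Ax [(LForm.bang (deqAt τ (.var x τ) (.var y τ))).neg,
        (A.substTm z (Tm.var x τ)).neg, A.substTm z (Tm.var y τ)]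
  | tag0 (h : eqc = true) : LProof affine eqc Ax [.tag (sgT.app .zero)]
  | tagCon {Γ t} (h : eqc = true) :
      LProof affine eqc Ax (LForm.ntag t :: LForm.ntag t :: Γ) →
      LProof affine eqc Ax (LForm.ntag t :: Γ)
  | tagApp (x y : ℕ) (h : eqc = true) :
      LProof affine eqc Ax [.ntag (sgT.app (v0 x)), .ntag (sgT.app (v0 y)),
        .tag (sgT.app ((addT.app (v0 x)).app (v0 y)))]

/-- The linear universal quantifier `∀^lp x A :≡ ∀x (lp(x) ⊸ A)`. -/
def allLp (n : ℕ) (τ : Ty) (A : LForm) : LForm :=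
  .all n τ ((LForm.lp τ (.var n τ)).limp A)

/-- The linear existential quantifier `∃^lp x A :≡ ∃x (lp(x) ⊗ A)`. -/
def exLp (n : ℕ) (τ : Ty) (A : LForm) : LForm :=
  .ex n τ ((LForm.lp τ (.var n τ)).tensor A)

/-- The ε-guarded linear existential quantifier `∃^lp_ε x A :≡ ∃x (lp(x) ⊗ ε =₀ 0 ⊗ A)`. -/
def exLpE (e n : ℕ) (τ : Ty) (A : LForm) : LForm :=
  .ex n τ ((LForm.lp τ (.var n τ)).tensor ((LForm.eq (v0 e) .zero).tensor A))

/-- `halts(t·z) :≡ ∀u⁰ ∃v⁰ (t(⟨u⟩ * z̄v) ≠₀ 0)`. -/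
def haltsF (t z : Tm Ty1) : CForm :=
  let u := max t.maxVar z.maxVar
  let v := u + 1
  .all u 𝕆 (.ex v 𝕆
    (neqF (t.app (((seqCodeT.app z).app (v0 u)).app (v0 v))) .zero))

/-- `wit(t·z, x) :≡ ∀u⁰ ∃v⁰ (t(⟨u⟩ * z̄v) =₀ x(u)+1 ∧ ∀w <₀ v (t(⟨u⟩ * z̄w) =₀ 0))`. -/
def witF (t z x : Tm Ty1) : CForm :=
  let u := max (max t.maxVar z.maxVar) x.maxVar
  let v := u + 1
  let w := u + 2
  .all u 𝕆 (.ex v 𝕆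
    ((CForm.eq (t.app (((seqCodeT.app z).app (v0 u)).app (v0 v)))
        (Tm.app Tm.succ (x.app (v0 u)))).and
     (.all w 𝕆 ((ltF (v0 w) (v0 v)).imp
        (.eq (t.app (((seqCodeT.app z).app (v0 u)).app (v0 w))) .zero)))))

/-- `con_τ(s, t)`: the term `s` of type `comp τ` constructs the term `t` of type `τ`. -/
def conF : (τ : Ty) → Tm τ.comp → Tm τ → CForm
  | 𝕆, s, t =>
      let x := max s.maxVar t.maxVar
      (CForm.ex x 𝕆 (neqF (s.app (v0 x)) .zero)).and
        (.all x 𝕆 ((neqF (s.app (v0 x)) .zero).imp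
          (.eq (s.app (v0 x)) (Tm.app Tm.succ t))))
  | .arr ρ τ, s, t =>
      let n := max s.maxVar t.maxVar
      .all n ρ.comp (.all (n + 1) ρ
        ((conF ρ (.var n ρ.comp) (.var (n + 1) ρ)).imp
          (conF τ (s.app (.var n ρ.comp)) (t.app (.var (n + 1) ρ)))))

/-! ### Dialectica interpretation -/

/-- Iterated function type `arrows [σ₁,…,σₖ] τ = σ₁ ⤳ ⋯ ⤳ σₖ ⤳ τ`. -/
def arrows (args : List Ty) (τ : Ty) : Ty := args.foldr Ty.arr τ

/-- Abstract each type in `l` over the argument types `args`. -/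
def absTys (args : List Ty) (l : List Ty) : List Ty := l.map (arrows args)

/-- Witness and counterexample type tuples of the Dialectica interpretation,
parametrized by the witness type `lpW τ` assigned to the linear predicate `lp_τ`. -/
def wcty (lpW : Ty → Ty) : LForm → List Ty × List Ty
  | .lp τ _ => ([lpW τ], [])
  | .nlp τ _ => ([], [lpW τ])
  | .tensor A B =>
      ((wcty lpW A).1 ++ (wcty lpW B).1,
       absTys (wcty lpW B).1 (wcty lpW A).2 ++ absTys (wcty lpW A).1 (wcty lpW B).2)
  | .par A B =>
      (absTys (wcty lpW B).2 (wcty lpW A).1 ++ absTys (wcty lpW A).2 (wcty lpW B).1,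
       (wcty lpW A).2 ++ (wcty lpW B).2)
  | .oplus A B =>
      ((wcty lpW A).1 ++ ((wcty lpW B).1 ++ [𝕆]), (wcty lpW A).2 ++ (wcty lpW B).2)
  | .withC A B =>
      ((wcty lpW A).1 ++ (wcty lpW B).1, (wcty lpW A).2 ++ ((wcty lpW B).2 ++ [𝕆]))
  | .bang A => ((wcty lpW A).1, [])
  | .quest A => ([], (wcty lpW A).2)
  | .all _ _ A => wcty lpW A
  | .ex _ _ A => wcty lpW A
  | _ => ([], [])

/-- Witness types of `A`. -/
abbrev wty (lpW : Ty → Ty) (A : LForm) : List Ty := (wcty lpW A).1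
/-- Counterexample types of `A`. -/
abbrev cty (lpW : Ty → Ty) (A : LForm) : List Ty := (wcty lpW A).2

/-- Heterogeneous tuples of terms. -/
inductive Tms : List Ty → Type
  | nil : Tms []
  | cons {τ l} : Tm τ → Tms l → Tms (τ :: l)

/-- Left part of a split tuple. -/
def Tms.splitl : {l l' : List Ty} → Tms (l ++ l') → Tms l
  | [], _, _ => .nil
  | _ :: _, _, .cons a u => .cons a (Tms.splitl u)

/-- Right part of a split tuple. -/
def Tms.splitr : {l l' : List Ty} → Tms (l ++ l') → Tms l'
  | [], _, v => v
  | _ :: _, _, .cons _ u => Tms.splitr u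

/-- Head of a nonempty tuple. -/
def Tms.hd : {τ : Ty} → {l : List Ty} → Tms (τ :: l) → Tm τ
  | _, _, .cons a _ => a

/-- Apply a term of iterated function type to a tuple of arguments. -/
def appAll : {args : List Ty} → {τ : Ty} → Tm (arrows args τ) → Tms args → Tm τ
  | [], _, t, _ => t
  | _ :: _, _, t, .cons u us => appAll (t.app u) us

/-- Apply each member of a tuple of functionals to the same argument tuple. -/
def appEach : {l : List Ty} → {args : List Ty} → Tms (absTys args l) → Tms args → Tms l
  | [], _, _, _ => .nil
  | _ :: _, _, .cons f fs, us => .cons (appAll f us) (appEach fs us)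

/-- The tuple of variables with indices `n, n+1, …` and types from `l`. -/
def varTms : (l : List Ty) → ℕ → Tms l
  | [], _ => .nil
  | τ :: l, n => .cons (.var n τ) (varTms l (n + 1))

/-- The tuple of variables with indices `g 0, g 1, …` and types from `l`. -/
def mkVarTms : (l : List Ty) → (ℕ → ℕ) → Tms l
  | [], _ => .nil
  | τ :: l, g => .cons (.var (g 0) τ) (mkVarTms l (fun k => g (k + 1)))

/-- Universal quantifier prefix over fresh variables `n, n+1, …` of types `l`. -/
def allPre : (l : List Ty) → ℕ → LForm → LForm
  | [], _, A => A
  | τ :: l, n, A => .all n τ (allPre l (n + 1) A)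

/-- Existential quantifier prefix over fresh variables `n, n+1, …` of types `l`. -/
def exPre : (l : List Ty) → ℕ → LForm → LForm
  | [], _, A => A
  | τ :: l, n, A => .ex n τ (exPre l (n + 1) A)

/-- Free variables of a tuple of terms. -/
def Tms.fvars : {l : List Ty} → Tms l → Set (ℕ × Ty)
  | _, .nil => ∅
  | _, .cons a u => a.fvars ∪ u.fvars

/-- A strict upper bound for all variable indices occurring in a tuple. -/
def Tms.maxVar : {l : List Ty} → Tms l → ℕ
  | _, .nil => 0
  | _, .cons a u => max a.maxVar u.maxVar

/-- Gödel's Dialectica interpretation `|A|^w_c` for linear logic with linear predicate,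
parametrized by the interpretation `lpI` of the linear predicate
(`|lp_τ(t)|^x :≡ lpI τ t x`). -/
def dia (lpW : Ty → Ty) (lpI : (τ : Ty) → Tm τ → Tm (lpW τ) → LForm) :
    (A : LForm) → Tms (wty lpW A) → Tms (cty lpW A) → LForm
  | .one, _, _ => .one
  | .zer, _, _ => .zer
  | .top, _, _ => .top
  | .bot, _, _ => .bot
  | .eq s t, _, _ => .eq s t
  | .neq s t, _, _ => .neq s t
  | .deq s t, _, _ => .deq s t
  | .ndeq s t, _, _ => .ndeq s t
  | .tag t, _, _ => .tag t
  | .ntag t, _, _ => .ntag t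
  | .ph, _, _ => .ph
  | .nph, _, _ => .nph
  | .lp τ t, w, _ => lpI τ t (Tms.hd w)
  | .nlp τ t, _, c => (lpI τ t (Tms.hd c)).neg
  | .tensor A B, w, c =>
      let x := Tms.splitl (l := wty lpW A) (l' := wty lpW B) w
      let u := Tms.splitr (l := wty lpW A) (l' := wty lpW B) w
      let f := Tms.splitl (l := absTys (wty lpW B) (cty lpW A))
        (l' := absTys (wty lpW A) (cty lpW B)) c
      let g := Tms.splitr (l := absTys (wty lpW B) (cty lpW A))
        (l' := absTys (wty lpW A) (cty lpW B)) c
      (dia lpW lpI A x (appEach f u)).tensor (dia lpW lpI B u (appEach g x))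
  | .par A B, w, c =>
      let f := Tms.splitl (l := absTys (cty lpW B) (wty lpW A))
        (l' := absTys (cty lpW A) (wty lpW B)) w
      let g := Tms.splitr (l := absTys (cty lpW B) (wty lpW A))
        (l' := absTys (cty lpW A) (wty lpW B)) w
      let x := Tms.splitl (l := cty lpW A) (l' := cty lpW B) c
      let u := Tms.splitr (l := cty lpW A) (l' := cty lpW B) c
      (dia lpW lpI A (appEach f u) x).par (dia lpW lpI B (appEach g x) u)
  | .oplus A B, w, c =>
      let x := Tms.splitl (l := wty lpW A) (l' := wty lpW B ++ [𝕆]) w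
      let r := Tms.splitr (l := wty lpW A) (l' := wty lpW B ++ [𝕆]) w
      let u := Tms.splitl (l := wty lpW B) (l' := [𝕆]) r
      let k0 := Tms.hd (Tms.splitr (l := wty lpW B) (l' := [𝕆]) r)
      let y := Tms.splitl (l := cty lpW A) (l' := cty lpW B) c
      let v := Tms.splitr (l := cty lpW A) (l' := cty lpW B) c
      ((LForm.bang (.deq k0 .zero)).tensor (dia lpW lpI A x y)).oplus
        ((LForm.bang (.ndeq k0 .zero)).tensor (dia lpW lpI B u v))
  | .withC A B, w, c =>
      let x := Tms.splitl (l := wty lpW A) (l' := wty lpW B) w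
      let u := Tms.splitr (l := wty lpW A) (l' := wty lpW B) w
      let y := Tms.splitl (l := cty lpW A) (l' := cty lpW B ++ [𝕆]) c
      let r := Tms.splitr (l := cty lpW A) (l' := cty lpW B ++ [𝕆]) c
      let v := Tms.splitl (l := cty lpW B) (l' := [𝕆]) r
      let k0 := Tms.hd (Tms.splitr (l := cty lpW B) (l' := [𝕆]) r)
      ((LForm.bang (.deq k0 .zero)).limp (dia lpW lpI A x y)).withC
        ((LForm.bang (.ndeq k0 .zero)).limp (dia lpW lpI B u v))
  | .bang A, w, _ =>
      let n := max A.maxVar w.maxVar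
      .bang (allPre (cty lpW A) n (dia lpW lpI A w (varTms (cty lpW A) n)))
  | .quest A, _, c =>
      let n := max A.maxVar c.maxVar
      .quest (exPre (wty lpW A) n (dia lpW lpI A (varTms (wty lpW A) n) c))
  | .all m τ A, w, c => .all m τ (dia lpW lpI A w c)
  | .ex m τ A, w, c => .ex m τ (dia lpW lpI A w c)

/-- The tagging interpretation of the linear predicate:
`|lp_τ(t)|^{x⁰} :≡ lp_τ(t) ⊗ □(sg x)`. -/
def lpWTag : Ty → Ty := fun _ => 𝕆
/-- The tagging interpretation of the linear predicate. -/
def lpITag : (τ : Ty) → Tm τ → Tm 𝕆 → LForm :=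
  fun τ t x => (LForm.lp τ t).tensor (.tag (sgT.app x))

/-- The computability interpretation of the linear predicate:
`|lp_τ(t)|^{x^{comp τ}} :≡ (con_τ(x, t))^L`. -/
def lpWCon : Ty → Ty := Ty.comp
/-- The computability interpretation of the linear predicate. -/
def lpICon : (τ : Ty) → Tm τ → Tm τ.comp → LForm :=
  fun τ t x => (conF τ x t).emb

/-! ### Standard model and simple phase semantics -/

/-- Set-theoretic denotation of the finite types (the full standard model). -/
def Ty.den : Ty → Type
  | 𝕆 => ℕ
  | .arr σ τ => σ.den → τ.den

/-- Default element of each type. -/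
def Ty.dflt : (τ : Ty) → τ.den
  | 𝕆 => (0 : ℕ)
  | .arr _ τ => fun _ => τ.dflt

/-- Variable environments for the standard model. -/
def Env : Type := (n : ℕ) → (τ : Ty) → τ.den

/-- The default environment. -/
def Env.default : Env := fun _ τ => τ.dflt

/-- Update an environment at a variable. -/
def Env.upd (e : Env) (n : ℕ) {σ : Ty} (a : σ.den) : Env :=
  fun m ρ => if h : m = n ∧ ρ = σ then (by rw [h.2]; exact a) else e m ρ

/-- Denotation of terms in the standard model. -/
def Tm.den : {τ : Ty} → Tm τ → Env → τ.den
  | _, .var n τ, e => e n τ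
  | _, .zero, _ => (0 : ℕ)
  | _, .succ, _ => Nat.succ
  | _, .K _ _, _ => fun a _ => a
  | _, .S _ _ _, _ => fun x y z => x z (y z)
  | _, .R _, _ => fun y z n => Nat.rec y (fun m ih => z m ih) n
  | _, .lam n σ t, e => fun a => Tm.den t (e.upd n (σ := σ) a)
  | _, .app f a, e => (Tm.den f e) (Tm.den a e)

/-- Variable assignments: every variable of type `τ` is mapped to a closed term of type `τ`
(closedness is a separate hypothesis). -/
def Assg : Type := (n : ℕ) → (τ : Ty) → Tm τ

/-- The environment induced by an assignment. -/
def Assg.env (β : Assg) : Env := fun n τ => (β n τ).den Env.default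

/-- Update an assignment at a variable. -/
def Assg.upd (β : Assg) (n : ℕ) {σ : Ty} (s : Tm σ) : Assg :=
  fun m ρ => if h : m = n ∧ ρ = σ then (by rw [h.2]; exact s) else β m ρ

/-- Numerical value of a term of type `0` under an assignment. -/
def Assg.val (β : Assg) (t : Tm 𝕆) : ℕ := t.den β.env

/-- The phase space `P = {0, 1}` is modelled by `Bool` with multiplication `&&`;
the set of antiphases is `{1} = {true}`.  `pol Q = Q^⊥`. -/
def pol (Q : Set Bool) : Set Bool := {p | ∀ q ∈ Q, (p && q) = true}

/-- Simple phase semantics for `ELPAω_eq` over the phase space `{0,1}`.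
`tagPos` is the fixed choice (`∅` or `{0,1}`) of the semantics of `□(t)` for
positive values of `t`. -/
def sem (tagPos : Set Bool) : LForm → Assg → Set Bool
  | .one, _ => {true}
  | .bot, _ => pol {true}
  | .top, _ => Set.univ
  | .zer, _ => pol Set.univ
  | .eq _ _, _ => {true}
  | .neq _ _, _ => pol {true}
  | .lp _ _, _ => {true}
  | .nlp _ _, _ => pol {true}
  | .ph, _ => {true}
  | .nph, _ => pol {true}
  | .deq s t, β => if β.val s = β.val t then Set.univ else ∅
  | .ndeq s t, β => pol (if β.val s = β.val t then Set.univ else ∅)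
  | .tag t, β => if β.val t = 0 then {true} else tagPos
  | .ntag t, β => pol (if β.val t = 0 then {true} else tagPos)
  | .tensor A B, β => {p | ∃ a ∈ sem tagPos A β, ∃ b ∈ sem tagPos B β, p = (a && b)}
  | .withC A B, β => sem tagPos A β ∪ sem tagPos B β
  | .quest A, β => sem tagPos A β ∪ {true}
  | .all n σ A, β => ⋂ (s : {t : Tm σ // t.Closed}), sem tagPos A (β.upd n s.1)
  | .par A B, β =>
      pol {p | ∃ a ∈ pol (sem tagPos A β), ∃ b ∈ pol (sem tagPos B β), p = (a && b)}
  | .oplus A B, β => pol (pol (sem tagPos A β) ∪ pol (sem tagPos B β))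
  | .bang A, β => pol (pol (sem tagPos A β) ∪ {true})
  | .ex n σ A, β =>
      pol (⋂ (s : {t : Tm σ // t.Closed}), pol (sem tagPos A (β.upd n s.1)))

/-- `0 =₀ 0`. -/
def eq00 : CForm := .eq .zero .zero
/-- `1 =₀ 0`. -/
def eq10 : CForm := .eq tm1 .zero

/-- The collapse of linear formulas to classical formulas:
`1, ⊤, lp, □ ↦ 0=0`; `0, ⊥ ↦ 1=0`; `⊗, & ↦ ∧`; `⅋, ⊕ ↦ ∨`; `≐ ↦ =`;
linear negation `↦ ¬`; the modalities are omitted. -/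
def LForm.collapse : LForm → CForm
  | .one => eq00
  | .top => eq00
  | .lp _ _ => eq00
  | .tag _ => eq00
  | .ph => eq00
  | .zer => eq10
  | .bot => eq10
  | .eq s t => .eq s t
  | .deq s t => .eq s t
  | .neq s t => .not (.eq s t)
  | .ndeq s t => .not (.eq s t)
  | .nlp _ _ => .not eq00
  | .ntag _ => .not eq00
  | .nph => .not eq00
  | .tensor A B => .and A.collapse B.collapse
  | .withC A B => .and A.collapse B.collapse
  | .par A B => .or A.collapse B.collapse
  | .oplus A B => .or A.collapse B.collapse
  | .bang A => A.collapse
  | .quest A => A.collapse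
  | .all n τ A => .all n τ A.collapse
  | .ex n τ A => .ex n τ A.collapse

/-- The placeholder `$` occurs only positively in `A`
(after unraveling all abbreviations and involutions, `A` does not contain `$^⊥`). -/
def LForm.PosPh : LForm → Prop
  | .nph => False
  | .tensor A B => A.PosPh ∧ B.PosPh
  | .par A B => A.PosPh ∧ B.PosPh
  | .oplus A B => A.PosPh ∧ B.PosPh
  | .withC A B => A.PosPh ∧ B.PosPh
  | .bang A => A.PosPh
  | .quest A => A.PosPh
  | .all _ _ A => A.PosPh
  | .ex _ _ A => A.PosPh
  | _ => True

/-- Substitute the formula `P` for the placeholder `$` in `A`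
(and `P^⊥` for `$^⊥`). -/
def LForm.phSubst (A P : LForm) : LForm :=
  match A with
  | .ph => P
  | .nph => P.neg
  | .tensor A B => .tensor (A.phSubst P) (B.phSubst P)
  | .par A B => .par (A.phSubst P) (B.phSubst P)
  | .oplus A B => .oplus (A.phSubst P) (B.phSubst P)
  | .withC A B => .withC (A.phSubst P) (B.phSubst P)
  | .bang A => .bang (A.phSubst P)
  | .quest A => .quest (A.phSubst P)
  | .all n τ A => .all n τ (A.phSubst P)
  | .ex n τ A => .ex n τ (A.phSubst P)
  | B => B


/-! ### Shared material for statements 15–17 -/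

/-- `A_at(x,y,u,v) :≡ (t x y u v =₀ 0)` for the closed characteristic term `t`. -/
def aAt (tch : Tm (Ty1 ⤳ Ty1 ⤳ 𝕆 ⤳ 𝕆 ⤳ 𝕆)) (x y : Tm Ty1) (u v : Tm 𝕆) : CForm :=
  .eq ((((tch.app x).app y).app u).app v) .zero

/-- The code of `⟨u⟩ * z̄v`. -/
def codeAt (z : Tm Ty1) (u v : Tm 𝕆) : Tm 𝕆 := ((seqCodeT.app z).app u).app v

/-- The defining property of the characteristic term `t`:
`∀x∀y∀u∀v (t x y u v =₀ 0 ↔ (x(⟨u⟩ * ȳv) ≠₀ 0 ∧ ∀w <₀ v (x(⟨u⟩ * ȳw) =₀ 0)))`. -/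
def chSpec (tch : Tm (Ty1 ⤳ Ty1 ⤳ 𝕆 ⤳ 𝕆 ⤳ 𝕆)) : CForm :=
  .all 0 Ty1 (.all 1 Ty1 (.all 2 𝕆 (.all 3 𝕆
    (iffC (aAt tch (.var 0 Ty1) (.var 1 Ty1) (v0 2) (v0 3))
      ((neqF ((Tm.var 0 Ty1).app (codeAt (.var 1 Ty1) (v0 2) (v0 3))) .zero).and
        (.all 4 𝕆 ((ltF (v0 4) (v0 3)).imp
          (.eq ((Tm.var 0 Ty1).app (codeAt (.var 1 Ty1) (v0 2) (v0 4))) .zero))))))))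

/-!
Classically, `halts(x·y)` gives for every `u` some `v` with `x(⟨u⟩ * ȳv) ≠ 0`, and the least
such `v` satisfies `A_at(x, y, u, v)` by the defining property of `t`. This least number
principle is proved by induction on `n` for `(∀w < n, x(⟨u⟩ * ȳw) = 0) ∨ ∃v A_at(x, y, u, v)`;
the only arithmetic it needs is `¬ w < 0` and `w < n + 1 → w = n ∨ w < n`, which follow from
the recursion equations of `addT`. The resulting derivation in the classical sequent calculus
of `EPAω` is carried over to the linear calculus by the Girard embedding: embedded formulas are
nonlinear, so `(!₂)` makes weakening and contraction available for them.
-/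

theorem LForm.neg_neg (A : LForm) : A.neg.neg = A := by
  induction A <;> simp [LForm.neg, *]

theorem LForm.Nonlinear.neg {A : LForm} (h : A.Nonlinear) : A.neg.Nonlinear := by
  induction A <;> simp_all [LForm.Nonlinear, LForm.neg]

theorem LForm.NoDotTag.neg {A : LForm} (h : A.NoDotTag) : A.neg.NoDotTag := by
  induction A <;> simp_all [LForm.NoDotTag, LForm.neg]

theorem LForm.fvars_neg (A : LForm) : A.neg.fvars = A.fvars := by
  induction A <;> simp_all [LForm.fvars, LForm.neg]

theorem LForm.neg_substTm (A : LForm) (n : ℕ) {σ : Ty} (s : Tm σ) :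
    (A.substTm n s).neg = A.neg.substTm n s := by
  induction A <;> simp only [LForm.substTm, LForm.neg, *] <;> split_ifs <;> simp [LForm.neg, *]

theorem LForm.FreeFor.neg {σ : Ty} {s : Tm σ} {n : ℕ} {A : LForm}
    (h : A.FreeFor s n) : A.neg.FreeFor s n := by
  induction A <;> simp_all [LForm.FreeFor, LForm.neg, LForm.fvars_neg] <;> tauto

theorem CForm.nonlinear_emb (A : CForm) : A.emb.Nonlinear := by
  induction A <;> simp_all [CForm.emb, LForm.Nonlinear, LForm.Nonlinear.neg]

theorem CForm.noDotTag_emb (A : CForm) : A.emb.NoDotTag := by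
  induction A <;> simp_all [CForm.emb, LForm.NoDotTag, LForm.NoDotTag.neg]

theorem CForm.fvars_emb (A : CForm) : A.emb.fvars = A.fvars := by
  induction A <;> simp_all [CForm.fvars, CForm.emb, LForm.fvars, LForm.fvars_neg]

theorem CForm.emb_substTm (A : CForm) (n : ℕ) {σ : Ty} (s : Tm σ) :
    (A.substTm n s).emb = A.emb.substTm n s := by
  induction A <;> simp only [CForm.substTm, CForm.emb, LForm.substTm, LForm.neg_substTm, *]
    <;> split_ifs <;> simp [CForm.emb, *]

theorem CForm.FreeFor.emb {σ : Ty} {s : Tm σ} {n : ℕ} {A : CForm}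
    (h : A.FreeFor s n) : A.emb.FreeFor s n := by
  induction A <;> simp_all [CForm.FreeFor, CForm.emb, LForm.FreeFor, LForm.FreeFor.neg,
    CForm.fvars_emb] <;> tauto

/-- The side conditions of `(!₂)` in all the linear calculi; under them weakening and
contraction are derivable. -/
def LForm.Structural (A : LForm) : Prop := A.Nonlinear ∧ A.NoDotTag

theorem LForm.Structural.neg {A : LForm} (h : A.Structural) : A.neg.Structural :=
  ⟨h.1.neg, h.2.neg⟩

theorem CForm.structural_emb (A : CForm) : A.emb.Structural :=
  ⟨A.nonlinear_emb, A.noDotTag_emb⟩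

namespace LProof

variable {affine eqc : Bool} {Ax : Set CForm} {Γ : List LForm} {A B : LForm}

theorem bang_neg_self (h : A.Structural) : LProof affine eqc Ax [.bang A.neg, A] := by
  have := bang2 (affine := affine) (eqc := eqc) (Ax := Ax) h.neg.1 fun _ => h.neg.2
  rw [LForm.neg_neg] at this
  exact this.perm (.swap _ _ _)

theorem weaken (h : A.Structural) (p : LProof affine eqc Ax Γ) :
    LProof affine eqc Ax (A :: Γ) :=
  ((p.wkq A).cut (bang_neg_self h)).perm List.perm_append_comm

theorem contract (h : A.Structural) (p : LProof affine eqc Ax (A :: A :: Γ)) :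
    LProof affine eqc Ax (A :: Γ) :=
  ((p.der.perm (.swap _ _ _)).der.conq.cut (bang_neg_self h)).perm List.perm_append_comm

theorem contract_append {E : List LForm} (hE : ∀ C ∈ E, C.Structural)
    (p : LProof affine eqc Ax (Γ ++ E ++ E)) : LProof affine eqc Ax (Γ ++ E) := by
  classical
  induction E generalizing Γ with
  | nil => simpa using p
  | cons C E ih =>
    have p' : LProof affine eqc Ax (C :: C :: (Γ ++ E ++ E)) :=
      p.perm (List.perm_iff_count.2 fun _ => by simp [List.count_cons]; omega)
    have := ih (Γ := Γ ++ [C]) (fun C h => hE C (List.mem_cons_of_mem _ h))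
      ((contract (hE C List.mem_cons_self) p').perm
        (List.perm_iff_count.2 fun _ => by simp [List.count_cons]; omega))
    simpa using this

theorem tensor_contract {E : List LForm} (hE : ∀ C ∈ E, C.Structural)
    (p : LProof affine eqc Ax (A :: E)) (q : LProof affine eqc Ax (B :: E)) :
    LProof affine eqc Ax (.tensor A B :: E) :=
  contract_append (Γ := [_]) hE (p.tensor q)

end LProof

def seqEmb (Γ Δ : List CForm) : List LForm :=
  Γ.map (fun A => A.emb.neg) ++ Δ.map CForm.emb

section seqEmb

variable {Γ Δ : List CForm}

theorem structural_of_mem_seqEmb : ∀ C ∈ seqEmb Γ Δ, C.Structural := by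
  simp only [seqEmb, List.mem_append, List.mem_map]
  rintro _ (⟨A, -, rfl⟩ | ⟨A, -, rfl⟩)
  exacts [A.structural_emb.neg, A.structural_emb]

theorem not_mem_fvars_of_mem_seqEmb {n : ℕ} {σ : Ty}
    (hΓ : ∀ B ∈ Γ, (n, σ) ∉ B.fvars) (hΔ : ∀ B ∈ Δ, (n, σ) ∉ B.fvars) :
    ∀ C ∈ seqEmb Γ Δ, (n, σ) ∉ C.fvars := by
  simp only [seqEmb, List.mem_append, List.mem_map]
  rintro _ (⟨A, hA, rfl⟩ | ⟨A, hA, rfl⟩)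
  · rw [LForm.fvars_neg, CForm.fvars_emb]; exact hΓ A hA
  · rw [CForm.fvars_emb]; exact hΔ A hA

theorem LProof.seqEmb_cons_right_iff {affine eqc : Bool} {Ax : Set CForm} {A : CForm} :
    LProof affine eqc Ax (seqEmb Γ (A :: Δ)) ↔ LProof affine eqc Ax (A.emb :: seqEmb Γ Δ) :=
  ⟨fun p => p.perm List.perm_middle, fun p => p.perm List.perm_middle.symm⟩

end seqEmb

theorem CProof.toLProof {affine eqc : Bool} {Ax : Set CForm} {Γ Δ : List CForm}
    (h : CProof Ax Γ Δ) : LProof affine eqc Ax (seqEmb Γ Δ) := by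
  induction h with
  | ax h => exact .fromAx h
  | id A => exact (LProof.id A.emb).perm (.swap _ _ _)
  | cut _ _ ih₁ ih₂ =>
    refine (LProof.seqEmb_cons_right_iff.1 ih₁ |>.cut ih₂).perm ?_
    classical
    exact List.perm_iff_count.2 fun _ => by simp [seqEmb]; omega
  | permL _ hp ih => exact ih.perm ((hp.map _).append_right _)
  | permR _ hp ih => exact ih.perm ((hp.map _).append_left _)
  | wkL A _ ih => exact ih.weaken A.structural_emb.neg
  | wkR A _ ih => exact LProof.seqEmb_cons_right_iff.2 (ih.weaken A.structural_emb)
  | conL _ ih => exact ih.contract (CForm.structural_emb _).neg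
  | conR _ ih =>
    refine LProof.seqEmb_cons_right_iff.2 (LProof.contract (CForm.structural_emb _) ?_)
    exact ih.perm (List.perm_middle.trans (List.perm_middle.cons _))
  | notL _ ih =>
    show LProof _ _ _ (LForm.neg (LForm.neg _) :: _)
    rw [LForm.neg_neg]
    exact LProof.seqEmb_cons_right_iff.1 ih
  | notR _ ih => exact LProof.seqEmb_cons_right_iff.2 ih
  | andL _ ih => exact ih.par
  | andR _ _ ih₁ ih₂ =>
    exact LProof.seqEmb_cons_right_iff.2 (.tensor_contract structural_of_mem_seqEmb
      (LProof.seqEmb_cons_right_iff.1 ih₁) (LProof.seqEmb_cons_right_iff.1 ih₂))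
  | orL _ _ ih₁ ih₂ => exact .tensor_contract structural_of_mem_seqEmb ih₁ ih₂
  | orR _ ih =>
    exact LProof.seqEmb_cons_right_iff.2
      (ih.perm (List.perm_middle.trans (List.perm_middle.cons _))).par
  | impL _ _ ih₁ ih₂ =>
    show LProof _ _ _ (LForm.neg (.par _ _) :: _)
    rw [LForm.neg, LForm.neg_neg]
    exact .tensor_contract structural_of_mem_seqEmb (LProof.seqEmb_cons_right_iff.1 ih₁) ih₂
  | impR _ ih =>
    exact LProof.seqEmb_cons_right_iff.2 (ih.perm (List.perm_middle.cons _)).par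
  | allL t hff _ ih =>
    rw [seqEmb, List.map_cons, CForm.emb_substTm, LForm.neg_substTm] at ih
    exact ih.exR t hff.emb.neg
  | allR hΓ hΔ _ ih =>
    exact LProof.seqEmb_cons_right_iff.2 ((LProof.seqEmb_cons_right_iff.1 ih).allR
      (not_mem_fvars_of_mem_seqEmb hΓ hΔ))
  | exL hΓ hΔ _ ih => exact ih.allR (not_mem_fvars_of_mem_seqEmb hΓ hΔ)
  | exR t hff _ ih =>
    have := LProof.seqEmb_cons_right_iff.1 ih
    rw [CForm.emb_substTm] at this
    exact LProof.seqEmb_cons_right_iff.2 (this.exR t hff.emb)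

namespace Tm

variable {τ σ : Ty}

@[simp] theorem subst_var_self (n : ℕ) (s : Tm σ) : (Tm.var n σ).subst n s = s := by
  simp [Tm.subst]

@[simp] theorem subst_app {ρ : Ty} (f : Tm (ρ ⤳ τ)) (a : Tm ρ) (n : ℕ) (s : Tm σ) :
    (f.app a).subst n s = (f.subst n s).app (a.subst n s) := rfl

@[simp] theorem subst_zero (n : ℕ) (s : Tm σ) : Tm.zero.subst n s = .zero := rfl

@[simp] theorem subst_succ (n : ℕ) (s : Tm σ) : Tm.succ.subst n s = .succ := rfl

theorem subst_var_of_ne {m n : ℕ} {ρ : Ty} (s : Tm σ) (h : ¬(m = n ∧ ρ = σ)) :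
    (Tm.var m ρ).subst n s = .var m ρ :=
  dif_neg h

theorem subst_self (t : Tm τ) (n : ℕ) (σ : Ty) : t.subst n (.var n σ) = t := by
  induction t with
  | var m ρ =>
    by_cases h : m = n ∧ ρ = σ
    · obtain ⟨rfl, rfl⟩ := h; simp
    · exact subst_var_of_ne _ h
  | lam m ρ t ih => simp [Tm.subst, ih]
  | app f a ihf iha => simp [Tm.subst, ihf, iha]
  | _ => rfl

theorem subst_of_not_mem_fvars {t : Tm τ} {n : ℕ} (s : Tm σ) (h : (n, σ) ∉ t.fvars) :
    t.subst n s = t := by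
  induction t with
  | var m ρ => exact subst_var_of_ne s (by rintro ⟨rfl, rfl⟩; exact h rfl)
  | lam m ρ t ih =>
    simp only [Tm.fvars, Set.mem_sdiff, Set.mem_singleton_iff, not_and, not_not] at h
    simp only [Tm.subst]
    split_ifs with hm
    · rfl
    · rw [ih fun ht => hm ?_]
      obtain ⟨rfl, rfl⟩ := Prod.ext_iff.1 (h ht)
      exact ⟨rfl, rfl⟩
  | app f a ihf iha =>
    simp only [Tm.fvars, Set.mem_union, not_or] at h
    simp [Tm.subst, ihf h.1, iha h.2]
  | _ => rfl

theorem Closed.subst {t : Tm τ} (ht : t.Closed) (n : ℕ) (s : Tm σ) : t.subst n s = t :=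
  subst_of_not_mem_fvars s (by simp [show t.fvars = ∅ from ht])

theorem not_mem_fvars_of_maxVar_le {t : Tm τ} {n : ℕ} (h : t.maxVar ≤ n) :
    (n, σ) ∉ t.fvars := by
  induction t with
  | var m ρ => simp only [Tm.maxVar] at h; simp [Tm.fvars]; omega
  | lam m ρ t ih => simp only [Tm.maxVar, max_le_iff] at h; simp [Tm.fvars, ih h.2]
  | app f a ihf iha =>
    simp only [Tm.maxVar, max_le_iff] at h; simp [Tm.fvars, ihf h.1, iha h.2]
  | _ => simp [Tm.fvars]

theorem not_mem_fvars_subst {t : Tm τ} {n z : ℕ} {ρ : Ty} {s : Tm σ}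
    (ht : (n, ρ) ∉ t.fvars) (hs : (n, ρ) ∉ s.fvars) : (n, ρ) ∉ (t.subst z s).fvars := by
  induction t with
  | var m ρ' =>
    by_cases h : m = z ∧ ρ' = σ
    · obtain ⟨rfl, rfl⟩ := h; simpa using hs
    · rwa [subst_var_of_ne s h]
  | lam m ρ' t ih =>
    simp only [Tm.subst]
    split_ifs
    · exact ht
    · simp only [Tm.fvars, Set.mem_sdiff, Set.mem_singleton_iff, not_and, not_not] at ht ⊢
      exact fun h => ht (by by_contra h'; exact ih h' h)
  | app f a ihf iha =>
    simp only [Tm.fvars, Set.mem_union, not_or] at ht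
    simp [Tm.subst, Tm.fvars, ihf ht.1, iha ht.2]
  | _ => simp [Tm.subst, Tm.fvars]

theorem subst_subst_var {t : Tm τ} {x : ℕ} (hx : t.maxVar ≤ x) (z : ℕ) (s : Tm σ) :
    (t.subst z (.var x σ)).subst x s = t.subst z s := by
  induction t with
  | var m ρ =>
    by_cases h : m = z ∧ ρ = σ
    · obtain ⟨rfl, rfl⟩ := h; simp
    · simp only [Tm.maxVar] at hx
      rw [subst_var_of_ne _ h, subst_var_of_ne _ h, subst_var_of_ne _ (by omega)]
  | lam m ρ t ih =>
    simp only [Tm.maxVar, max_le_iff] at hx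
    simp only [Tm.subst]
    split_ifs
    · exact subst_of_not_mem_fvars s (not_mem_fvars_of_maxVar_le (by simp [Tm.maxVar]; omega))
    · simp only [Tm.subst, ih hx.2]
      rw [if_neg (by omega)]
  | app f a ihf iha =>
    simp only [Tm.maxVar, max_le_iff] at hx
    simp [Tm.subst, ihf hx.1, iha hx.2]
  | _ => rfl

end Tm

namespace CForm

variable {σ : Ty}

theorem substTm_self (A : CForm) (n : ℕ) (σ : Ty) : A.substTm n (.var n σ) = A := by
  induction A <;> simp only [CForm.substTm, Tm.subst_self, *] <;> split_ifs <;> rfl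

theorem qf.substTm {A : CForm} (h : A.qf) (n : ℕ) (s : Tm σ) : (A.substTm n s).qf := by
  induction A <;> simp_all [CForm.qf, CForm.substTm]

theorem freeFor_of_qf {A : CForm} (h : A.qf) (s : Tm σ) (n : ℕ) : A.FreeFor s n := by
  induction A <;> simp_all [CForm.qf, CForm.FreeFor]

theorem freeFor_var_self (A : CForm) (n : ℕ) (σ : Ty) : A.FreeFor (.var n σ) n := by
  induction A with
  | all m τ A ih | ex m τ A ih =>
    by_cases h : (m, τ) = (n, σ)
    · exact Or.inl (by simp [h])
    · exact Or.inr ⟨by simpa [Tm.fvars, eq_comm] using h, ih⟩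
  | _ => simp_all [CForm.FreeFor]

end CForm

namespace CProof

variable {Ax : Set CForm} {Γ Γ' Δ Δ' Θ : List CForm} {A B C : CForm}

theorem weakenL_append (L : List CForm) (h : CProof Ax Γ Δ) : CProof Ax (L ++ Γ) Δ := by
  induction L with
  | nil => exact h
  | cons C L ih => exact ih.wkL C

theorem weakenR_append (L : List CForm) (h : CProof Ax Γ Δ) : CProof Ax Γ (L ++ Δ) := by
  induction L with
  | nil => exact h
  | cons C L ih => exact ih.wkR C

theorem contractL_of_mem (hA : A ∈ Γ) (h : CProof Ax (A :: Γ) Δ) : CProof Ax Γ Δ := by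
  obtain ⟨s, t, rfl⟩ := List.append_of_mem hA
  exact (h.permL (List.perm_middle.cons A)).conL.permL List.perm_middle.symm

theorem contractR_of_mem (hA : A ∈ Δ) (h : CProof Ax Γ (A :: Δ)) : CProof Ax Γ Δ := by
  obtain ⟨s, t, rfl⟩ := List.append_of_mem hA
  exact (h.permR (List.perm_middle.cons A)).conR.permR List.perm_middle.symm

-- An antecedent `A` is moved to the succedent as `¬A` and recovered by a cut against `¬A, A ⊢`.
theorem monoL (h : CProof Ax Γ Δ) (hΓ : Γ ⊆ Γ') : CProof Ax Γ' Δ := by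
  induction Γ generalizing Δ with
  | nil => simpa using h.weakenL_append Γ'
  | cons A Γ ih =>
    rw [List.cons_subset] at hΓ
    have := (ih h.notR hΓ.2).cut (notL (Γ := [A]) (Δ := []) (id A))
    exact contractL_of_mem hΓ.1 (by simpa using this.permL List.perm_append_comm)

theorem monoR (h : CProof Ax Γ Δ) (hΔ : Δ ⊆ Δ') : CProof Ax Γ Δ' := by
  induction Δ generalizing Γ with
  | nil => simpa using h.weakenR_append Δ'
  | cons B Δ ih =>
    rw [List.cons_subset] at hΔ
    have := (notR (Γ := []) (Δ := [B]) (id B)).cut (ih h.notL hΔ.2)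
    exact contractR_of_mem hΔ.1 (by simpa using this)

theorem mono (h : CProof Ax Γ Δ) (hΓ : Γ ⊆ Γ') (hΔ : Δ ⊆ Δ') : CProof Ax Γ' Δ' :=
  (h.monoL hΓ).monoR hΔ

theorem of_mem (A : CForm) (hΓ : A ∈ Γ) (hΔ : A ∈ Δ) : CProof Ax Γ Δ :=
  (id A).mono (by simpa) (by simpa)

theorem cut_shared (h₁ : CProof Ax Γ (A :: Δ)) (h₂ : CProof Ax (A :: Γ) Δ) : CProof Ax Γ Δ :=
  (h₁.cut h₂).mono (by simp) (by simp)

theorem cut_of_subset (h : CProof Ax Θ [A]) (hΘ : Θ ⊆ Γ) (k : CProof Ax (A :: Γ) Δ) :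
    CProof Ax Γ Δ :=
  cut_shared (h.mono hΘ (by simp)) k

theorem cases_of_subset (h : CProof Ax Θ [A, B]) (hΘ : Θ ⊆ Γ) (hA : CProof Ax (A :: Γ) Δ)
    (hB : CProof Ax (B :: Γ) Δ) : CProof Ax Γ Δ :=
  cut_shared (cut_shared (h.mono hΘ (by simp)) (hA.monoR (by simp))) hB

theorem cut₁ (k : CProof Ax [A] Δ) (h : CProof Ax Γ [A]) : CProof Ax Γ Δ := by
  simpa using h.cut k

theorem cut₂ (k : CProof Ax [A, B] Δ) (h₁ : CProof Ax Γ [A]) (h₂ : CProof Ax Γ [B]) :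
    CProof Ax Γ Δ :=
  h₂.cut_of_subset (List.Subset.refl _) (by simpa using (h₁.cut k).permL List.perm_append_comm)

theorem impL_of_mem (hmem : A.imp B ∈ Γ) (h₁ : CProof Ax Γ (A :: Δ))
    (h₂ : CProof Ax (B :: Γ) Δ) : CProof Ax Γ Δ :=
  contractL_of_mem hmem (impL h₁ h₂)

theorem mp (h : CProof Ax [] [A.imp B]) (h₁ : CProof Ax Γ (A :: Δ)) (h₂ : CProof Ax (B :: Γ) Δ) :
    CProof Ax Γ Δ :=
  h.cut_of_subset (List.nil_subset _) (impL h₁ h₂)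

theorem of_imp (h : CProof Ax [] [A.imp B]) : CProof Ax [A] [B] :=
  h.mp (of_mem A (by simp) (by simp)) (of_mem B (by simp) (by simp))

theorem of_imp₂ (h : CProof Ax [] [A.imp (B.imp C)]) : CProof Ax [A, B] [C] :=
  h.mp (of_mem A (by simp) (by simp))
    (impL (of_mem B (by simp) (by simp)) (of_mem C (by simp) (by simp)))

theorem inst {n : ℕ} {σ : Ty} (h : CProof Ax [] [.all n σ A]) (t : Tm σ)
    (hff : A.FreeFor t n) : CProof Ax [] [A.substTm n t] :=
  h.cut_of_subset (List.nil_subset _) (allL t hff (id _))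

theorem substTm {n : ℕ} {σ : Ty} (h : CProof Ax [] [A]) (t : Tm σ) (hff : A.FreeFor t n) :
    CProof Ax [] [A.substTm n t] :=
  (h.allR (n := n) (σ := σ) (by simp) (by simp)).inst t hff

theorem substTm_of_qf (h : CProof Ax [] [A]) (hA : A.qf) (n : ℕ) {σ : Ty} (t : Tm σ) :
    CProof Ax [] [A.substTm n t] :=
  h.substTm t (CForm.freeFor_of_qf hA t n)

theorem allL_self {n : ℕ} {σ : Ty} (h : CProof Ax (A :: Γ) Δ) :
    CProof Ax (.all n σ A :: Γ) Δ :=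
  allL (.var n σ) (A.freeFor_var_self n σ) (by rwa [A.substTm_self])

theorem exR_self {n : ℕ} {σ : Ty} (h : CProof Ax Γ (A :: Δ)) :
    CProof Ax Γ (.ex n σ A :: Δ) :=
  exR (.var n σ) (A.freeFor_var_self n σ) (by rwa [A.substTm_self])

theorem of_all {n : ℕ} {σ : Ty} (h : CProof Ax [] [.all n σ A]) : CProof Ax [] [A] :=
  h.cut_of_subset (List.nil_subset _) (allL_self (id A))

end CProof

@[simp] theorem fvars_addT : addT.fvars = ∅ := by
  ext ⟨m, τ⟩
  simp [addT, recO, Tm.fvars, Prod.ext_iff]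

-- `addT` is `λ a b. R a addStep b`.
def addStep : Tm Ty2 := .lam 2 𝕆 (.lam 3 𝕆 (Tm.succ.app (v0 3)))

namespace EPA

open CProof

theorem eq_refl (a : Tm 𝕆) : CProof EPA [] [.eq a a] := by
  simpa [CForm.substTm] using (ax (Ax := EPA) (EPAAx.eqRefl 0)).substTm a (n := 0) trivial

theorem eq_subst_eq (s t : Tm 𝕆) (z : ℕ) (a b : Tm 𝕆) :
    CProof EPA [.eq a b, .eq (s.subst z a) (t.subst z a)] [.eq (s.subst z b) (t.subst z b)] := by
  -- Since `x` and `x + 1` occur neither in `s`, `t` nor `b`, substituting `b` for `x + 1` and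
  -- then `a` for `x` in the axiom acts as a simultaneous substitution.
  set x := max (max s.maxVar t.maxVar) b.maxVar
  have hs : s.maxVar ≤ x := by omega
  have ht : t.maxVar ≤ x := by omega
  have hb : (x, 𝕆) ∉ b.fvars := Tm.not_mem_fvars_of_maxVar_le (by omega)
  have hA : ((CForm.eq (v0 x) (v0 (x + 1))).imp (((CForm.eq s t).substTm z (v0 x)).imp
      ((CForm.eq s t).substTm z (v0 (x + 1))))).qf := ⟨trivial, trivial, trivial⟩
  have h := ((ax (EPAAx.eqSub (.eq s t) z x (x + 1) trivial trivial)).substTm_of_qf hA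
    (x + 1) b).substTm_of_qf (hA.substTm _ _) x a
  have hx : ∀ {u : Tm 𝕆}, u.maxVar ≤ x →
      ((u.subst z (v0 x)).subst (x + 1) b).subst x a = u.subst z a := fun hu => by
    rw [Tm.subst_of_not_mem_fvars b (Tm.not_mem_fvars_subst (Tm.not_mem_fvars_of_maxVar_le
      (by omega)) (by simp [Tm.fvars])), Tm.subst_subst_var hu]
  have hy : ∀ {u : Tm 𝕆}, u.maxVar ≤ x →
      ((u.subst z (v0 (x + 1))).subst (x + 1) b).subst x a = u.subst z b := fun hu => by
    rw [Tm.subst_subst_var (by omega), Tm.subst_of_not_mem_fvars a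
      (Tm.not_mem_fvars_subst (Tm.not_mem_fvars_of_maxVar_le hu) hb)]
  simp only [CForm.substTm, Tm.subst_var_self, Tm.subst_var_of_ne b (m := x) (n := x + 1)
    (by simp), Tm.subst_of_not_mem_fvars a hb, hx hs, hx ht, hy hs, hy ht] at h
  exact h.of_imp₂

theorem eq_symm (a b : Tm 𝕆) : CProof EPA [.eq a b] [.eq b a] := by
  have ha : (a.maxVar, 𝕆) ∉ a.fvars := Tm.not_mem_fvars_of_maxVar_le le_rfl
  have h := eq_subst_eq (v0 a.maxVar) a a.maxVar a b
  simp only [Tm.subst_var_self, Tm.subst_of_not_mem_fvars _ ha] at h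
  exact cut₂ h (.id _) ((eq_refl a).monoL (List.nil_subset _))

theorem eq_trans (a b c : Tm 𝕆) : CProof EPA [.eq a b, .eq b c] [.eq a c] := by
  have hc : (c.maxVar, 𝕆) ∉ c.fvars := Tm.not_mem_fvars_of_maxVar_le le_rfl
  have h := eq_subst_eq (v0 c.maxVar) c c.maxVar b a
  simp only [Tm.subst_var_self, Tm.subst_of_not_mem_fvars _ hc] at h
  exact (eq_symm a b).cut_of_subset (by simp) (h.monoL (by simp))

theorem succ_congr (a b : Tm 𝕆) :
    CProof EPA [.eq a b] [.eq (Tm.succ.app a) (Tm.succ.app b)] := by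
  have ha : (a.maxVar, 𝕆) ∉ a.fvars := Tm.not_mem_fvars_of_maxVar_le le_rfl
  have h := eq_subst_eq (Tm.succ.app a) (Tm.succ.app (v0 a.maxVar)) a.maxVar a b
  simp only [Tm.subst_app, Tm.subst_succ, Tm.subst_var_self, Tm.subst_of_not_mem_fvars _ ha] at h
  exact cut₂ h (.id _) ((eq_refl _).monoL (List.nil_subset _))

theorem succ_inj (a b : Tm 𝕆) :
    CProof EPA [.eq (Tm.succ.app a) (Tm.succ.app b)] [.eq a b] := by
  have hb : (b.maxVar, 𝕆) ∉ b.fvars := Tm.not_mem_fvars_of_maxVar_le le_rfl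
  have h := ((ax (Ax := EPA) (EPAAx.succInj b.maxVar (b.maxVar + 1))).substTm_of_qf
    ⟨trivial, trivial⟩ (b.maxVar + 1) b).substTm_of_qf (by simp [CForm.qf, CForm.substTm])
    b.maxVar a
  simp [CForm.substTm, Tm.subst, Tm.subst_of_not_mem_fvars _ hb] at h
  exact h.of_imp

theorem succ_ne_zero (a : Tm 𝕆) : CProof EPA [.eq (Tm.succ.app a) .zero] [] := by
  have h := (ax (Ax := EPA) (EPAAx.succNeZero 0)).substTm_of_qf trivial 0 a
  simp [CForm.substTm, Tm.subst] at h
  exact h.cut_of_subset (List.nil_subset _)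
    (notL (of_mem (.eq (Tm.succ.app a) .zero) (by simp) (by simp)))

theorem induction (A : CForm) (n : ℕ) (hff : A.FreeFor (Tm.succ.app (v0 n)) n)
    (h₀ : CProof EPA [] [A.substTm n .zero])
    (hs : CProof EPA [A] [A.substTm n (Tm.succ.app (v0 n))]) :
    CProof EPA [] [.all n 𝕆 A] :=
  (ax (Ax := EPA) (EPAAx.axInd A n hff)).of_imp.cut₁ (andR h₀ (hs.impR.allR (by simp) (by simp)))

theorem add_var_eq_rec (b : Tm 𝕆) :
    CProof EPA [] [.eq ((addT.app (v0 4)).app b) (recO (v0 4) addStep b)] := by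
  have hβ₀ : CProof EPA [] [.all 5 𝕆 (.eq ((addT.app (v0 4)).app (v0 5))
      ((Tm.lam 1 𝕆 (recO (v0 4) addStep (v0 1))).app (v0 5)))] :=
    ax (EPAAx.axBeta 0 (.lam 1 𝕆 (recO (v0 0) addStep (v0 1))) (v0 4)
      (.inr (.inr ⟨by simp [Tm.fvars], ⟨⟨trivial, trivial⟩, .inl (by simp [Tm.fvars])⟩,
        trivial⟩)))
  have hβ₁ : CProof EPA [] [.eq ((Tm.lam 1 𝕆 (recO (v0 4) addStep (v0 1))).app b)
      (recO (v0 4) addStep b)] :=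
    ax (EPAAx.axBeta 1 (recO (v0 4) addStep (v0 1)) b
      ⟨⟨⟨trivial, trivial⟩, .inl (by simp [Tm.fvars])⟩, trivial⟩)
  exact cut₂ (eq_trans _ _ _) (hβ₀.inst b trivial) hβ₁

theorem add_zero (a : Tm 𝕆) : CProof EPA [] [.eq ((addT.app a).app .zero) a] := by
  have h : CProof EPA [] [.eq ((addT.app (v0 4)).app .zero) (v0 4)] :=
    cut₂ (eq_trans _ _ _) (add_var_eq_rec .zero) (ax (EPAAx.axR0 (v0 4) addStep))
  simpa [CForm.substTm, Tm.Closed.subst fvars_addT] using h.substTm_of_qf trivial 4 a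

theorem add_var_succ :
    CProof EPA [] [.eq ((addT.app (v0 4)).app (Tm.succ.app (v0 5)))
      (Tm.succ.app ((addT.app (v0 4)).app (v0 5)))] := by
  have hR : CProof EPA [] [.eq (recO (v0 4) addStep (Tm.succ.app (v0 5)))
      ((addStep.app (v0 5)).app (recO (v0 4) addStep (v0 5)))] :=
    ax (EPAAx.axRS (v0 4) addStep (v0 5))
  have hβ₂ : CProof EPA [] [.all 6 𝕆 (.eq ((addStep.app (v0 5)).app (v0 6))
      ((Tm.lam 3 𝕆 (Tm.succ.app (v0 3))).app (v0 6)))] :=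
    ax (EPAAx.axBeta 2 (.lam 3 𝕆 (Tm.succ.app (v0 3))) (v0 5)
      (.inr (.inr ⟨by simp [Tm.fvars], trivial, trivial⟩)))
  have hβ₃ : CProof EPA [] [.eq ((Tm.lam 3 𝕆 (Tm.succ.app (v0 3))).app
      (recO (v0 4) addStep (v0 5))) (Tm.succ.app (recO (v0 4) addStep (v0 5)))] :=
    ax (EPAAx.axBeta 3 (Tm.succ.app (v0 3)) _ ⟨trivial, trivial⟩)
  have hS := cut₁ (succ_congr _ _) (cut₁ (eq_symm _ _) (add_var_eq_rec (v0 5)))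
  exact cut₂ (eq_trans _ _ _) (cut₂ (eq_trans _ _ _) (add_var_eq_rec _) hR)
    (cut₂ (eq_trans _ _ _) (cut₂ (eq_trans _ _ _) (hβ₂.inst _ trivial) hβ₃) hS)

theorem add_succ (a b : Tm 𝕆) :
    CProof EPA [] [.eq ((addT.app a).app (Tm.succ.app b)) (Tm.succ.app ((addT.app a).app b))] := by
  -- `4` is first renamed to a variable `N` not occurring in `b`.
  set N := max 6 b.maxVar
  have hb : (N, 𝕆) ∉ b.fvars := Tm.not_mem_fvars_of_maxVar_le (le_max_right _ _)
  have h := ((add_var_succ.substTm_of_qf trivial 4 (v0 N)).substTm_of_qf trivial 5 b).substTm_of_qf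
    trivial N a
  simpa [CForm.substTm, Tm.Closed.subst fvars_addT, Tm.subst_var_of_ne,
    Tm.subst_of_not_mem_fvars _ hb, show N ≠ 5 by omega] using h

theorem add_succ_ne_zero (a b : Tm 𝕆) :
    CProof EPA [.eq ((addT.app a).app (Tm.succ.app b)) .zero] [] :=
  cut₁ (succ_ne_zero _) <| cut₂ (eq_trans _ _ _)
    (cut₁ (eq_symm _ _) ((add_succ a b).monoL (List.nil_subset _))) (.id _)

theorem add_eq_of_add_succ_eq_succ (a b c : Tm 𝕆) :
    CProof EPA [.eq ((addT.app a).app (Tm.succ.app b)) (Tm.succ.app c)]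
      [.eq ((addT.app a).app b) c] :=
  cut₁ (succ_inj _ _) <| cut₂ (eq_trans _ _ _)
    (cut₁ (eq_symm _ _) ((add_succ a b).monoL (List.nil_subset _))) (.id _)
theorem zero_or_succ (a : Tm 𝕆) :
    CProof EPA [] [(CForm.eq a .zero).or (.ex a.maxVar 𝕆 (.eq a (Tm.succ.app (v0 a.maxVar))))] := by
  set k := a.maxVar
  have hk : ¬(k = k + 1 ∧ (𝕆 : Ty) = 𝕆) := by simp
  have hk' : ¬(k + 1 = k ∧ (𝕆 : Ty) = 𝕆) := by simp
  set D : CForm :=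
    (CForm.eq (v0 (k + 1)) .zero).or (.ex k 𝕆 (.eq (v0 (k + 1)) (Tm.succ.app (v0 k))))
  have h₀ : CProof EPA [] [D.substTm (k + 1) .zero] := by
    simp [D, CForm.substTm, Tm.subst_var_of_ne _ hk]
    exact orR ((eq_refl .zero).monoR (by simp))
  have hs : CProof EPA [D] [D.substTm (k + 1) (Tm.succ.app (v0 (k + 1)))] := by
    simp [D, CForm.substTm, Tm.subst_var_of_ne _ hk]
    refine orR ((exR (n := k) (A := .eq (Tm.succ.app (v0 (k + 1))) (Tm.succ.app (v0 k)))
      (v0 (k + 1)) trivial ?_).permR (.swap _ _ _))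
    simp only [CForm.substTm, Tm.subst_app, Tm.subst_succ, Tm.subst_var_self,
      Tm.subst_var_of_ne _ hk']
    exact (eq_refl (Tm.succ.app (v0 (k + 1)))).mono (List.nil_subset _) (by simp)
  have h := (induction D (k + 1) ⟨trivial, .inr ⟨by simp [Tm.fvars], trivial⟩⟩ h₀ hs).inst a
    ⟨trivial, .inr ⟨Tm.not_mem_fvars_of_maxVar_le le_rfl, trivial⟩⟩
  simpa [D, CForm.substTm, if_neg hk, Tm.subst_var_of_ne _ hk] using h

theorem not_ltF_zero (a : Tm 𝕆) : CProof EPA [ltF a .zero] [] :=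
  exL (by simp) (by simp) (add_succ_ne_zero a _)

theorem ltF_succ (a b : Tm 𝕆) : CProof EPA [ltF a (Tm.succ.app b)] [.eq a b, ltF a b] := by
  set k := max a.maxVar b.maxVar
  have ha : (k, 𝕆) ∉ a.fvars := Tm.not_mem_fvars_of_maxVar_le (le_max_left _ _)
  have hb : (k, 𝕆) ∉ b.fvars := Tm.not_mem_fvars_of_maxVar_le (le_max_right _ _)
  have ha' : (k + 1, 𝕆) ∉ a.fvars := Tm.not_mem_fvars_of_maxVar_le (by omega)
  have hb' : (k + 1, 𝕆) ∉ b.fvars := Tm.not_mem_fvars_of_maxVar_le (by omega)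
  have hlt : ltF a (Tm.succ.app b) =
      .ex k 𝕆 (.eq ((addT.app a).app (Tm.succ.app (v0 k))) (Tm.succ.app b)) := by
    simp [ltF, Tm.maxVar, k]
  rw [hlt]
  refine exL (by simp) (by simp [ltF, CForm.fvars, Tm.fvars, ha, hb, k]) ?_
  -- From `a + S k = S b` get `a + k = b`; then `k = 0` gives `a = b`, and `k = S j` gives `a < b`.
  refine (add_eq_of_add_succ_eq_succ a (v0 k) b).cut_of_subset (by simp) ?_
  have hk : CProof EPA [] [(CForm.eq (v0 k) .zero).or
      (.ex (k + 1) 𝕆 (.eq (v0 k) (Tm.succ.app (v0 (k + 1)))))] :=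
    zero_or_succ (v0 k)
  refine hk.cut_of_subset (List.nil_subset _) (orL ?_ ?_)
  · have h := eq_subst_eq ((addT.app a).app (v0 k)) b k (v0 k) .zero
    simp only [Tm.subst_self, Tm.subst_app, Tm.Closed.subst fvars_addT, Tm.subst_var_self,
      Tm.subst_of_not_mem_fvars _ ha, Tm.subst_of_not_mem_fvars _ hb] at h
    refine h.cut_of_subset (by simp) ?_
    refine (cut₁ (eq_symm _ _) (add_zero a)).cut_of_subset (List.nil_subset _) ?_
    refine (eq_trans a ((addT.app a).app .zero) b).cut_of_subset (by simp) ?_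
    exact of_mem (.eq a b) (by simp) (by simp)
  · refine exL (by simp [CForm.fvars, Tm.fvars, ha', hb'])
      (by simp [ltF, CForm.fvars, Tm.fvars, ha', hb', k]) ?_
    have h := eq_subst_eq ((addT.app a).app (v0 k)) b k (v0 k) (Tm.succ.app (v0 (k + 1)))
    simp only [Tm.subst_self, Tm.subst_app, Tm.Closed.subst fvars_addT, Tm.subst_var_self,
      Tm.subst_of_not_mem_fvars _ ha, Tm.subst_of_not_mem_fvars _ hb] at h
    refine h.cut_of_subset (by simp) ?_
    refine (exR (n := k) (A := .eq ((addT.app a).app (Tm.succ.app (v0 k))) b) (v0 (k + 1))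
      trivial ?_).permR (.swap _ _ _)
    simp only [CForm.substTm, Tm.subst_app, Tm.Closed.subst fvars_addT, Tm.subst_succ,
      Tm.subst_of_not_mem_fvars _ ha, Tm.subst_of_not_mem_fvars _ hb, Tm.subst_var_self]
    exact of_mem (.eq ((addT.app a).app (Tm.succ.app (v0 (k + 1)))) b) (by simp) (by simp)

end EPA

section Minimization

open CProof

/-- `x(⟨u⟩ * ȳw) =₀ 0`, for `x, y, u` the variables `0, 1, 2` of `A_at(x, y, u, v)`. -/
def zeroAt (w : Tm 𝕆) : CForm :=
  .eq ((Tm.var 0 Ty1).app (codeAt (.var 1 Ty1) (v0 2) w)) .zero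

def zeroBelow (t : Tm 𝕆) : CForm :=
  .all 4 𝕆 ((ltF (v0 4) t).imp (zeroAt (v0 4)))

def existsAat (tch : Tm (Ty1 ⤳ Ty1 ⤳ 𝕆 ⤳ 𝕆 ⤳ 𝕆)) : CForm :=
  .ex 3 𝕆 (aAt tch (.var 0 Ty1) (.var 1 Ty1) (v0 2) (v0 3))

/-- `(∀w < v, x(⟨u⟩ * ȳw) = 0) ∨ ∃v A_at(x, y, u, v)` with `v` the variable `3`: since `∃v`
rebinds it, substituting for `v` leaves the second disjunct unchanged. -/
def minimizationF (tch : Tm (Ty1 ⤳ Ty1 ⤳ 𝕆 ⤳ 𝕆 ⤳ 𝕆)) : CForm :=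
  (zeroBelow (v0 3)).or (existsAat tch)

variable {tch : Tm (Ty1 ⤳ Ty1 ⤳ 𝕆 ⤳ 𝕆 ⤳ 𝕆)}

@[simp] theorem fvars_seqCodeT : seqCodeT.fvars = ∅ := by
  ext ⟨m, τ⟩
  simp [seqCodeT, pairT, triT, addT, recO, Tm.fvars, Prod.ext_iff]

theorem not_mem_fvars_existsAat (htc : tch.Closed) {n : ℕ} (hn : n ≠ 2) :
    (n, 𝕆) ∉ (existsAat tch).fvars := by
  simp [existsAat, aAt, CForm.fvars, Tm.fvars, show tch.fvars = ∅ from htc, hn]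

theorem zeroAt_or_existsAat_of_zeroBelow (hspec : CProof EPA [] [chSpec tch]) :
    CProof EPA [zeroBelow (v0 3)] [zeroAt (v0 3), existsAat tch] := by
  have h : CProof EPA [] [iffC (aAt tch (.var 0 Ty1) (.var 1 Ty1) (v0 2) (v0 3))
      ((zeroAt (v0 3)).not.and (zeroBelow (v0 3)))] :=
    hspec.of_all.of_all.of_all.of_all
  refine h.cut_of_subset (List.nil_subset _) (andL (impL_of_mem
    (A := (zeroAt (v0 3)).not.and (zeroBelow (v0 3)))
    (B := aAt tch (.var 0 Ty1) (.var 1 Ty1) (v0 2) (v0 3)) (by simp) ?_ ?_))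
  · exact andR (notR (of_mem (zeroAt (v0 3)) (by simp) (by simp)))
      (of_mem (zeroBelow (v0 3)) (by simp) (by simp))
  · have h : CProof EPA [aAt tch (.var 0 Ty1) (.var 1 Ty1) (v0 2) (v0 3)] [existsAat tch] :=
      exR_self (.id _)
    exact h.mono (by simp) (by simp)

theorem minimizationF_zero (htc : tch.Closed) :
    CProof EPA [] [(minimizationF tch).substTm 3 .zero] := by
  show CProof EPA [] [(zeroBelow .zero).or (existsAat tch)]
  refine orR (allR (by simp) (by simpa using not_mem_fvars_existsAat htc (n := 4) (by decide))
    (impR ?_))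
  exact (EPA.not_ltF_zero (v0 4)).mono (by simp) (List.nil_subset _)

theorem zeroAt_congr (a b : Tm 𝕆) : CProof EPA [.eq a b, zeroAt a] [zeroAt b] :=
  EPA.eq_subst_eq ((Tm.var 0 Ty1).app (codeAt (.var 1 Ty1) (v0 2) (v0 5))) .zero 5 a b

theorem zeroBelow_succ_of_zeroAt (htc : tch.Closed) :
    CProof EPA [zeroAt (v0 3), zeroBelow (v0 3)]
      [zeroBelow (Tm.succ.app (v0 3)), existsAat tch] := by
  refine allR (by simp [zeroAt, zeroBelow, codeAt, CForm.fvars, Tm.fvars])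
    (by simpa using not_mem_fvars_existsAat htc (n := 4) (by decide)) (impR ?_)
  refine (EPA.ltF_succ (v0 4) (v0 3)).cases_of_subset (by simp) ?_ ?_
  · exact (EPA.eq_symm (v0 4) (v0 3)).cut_of_subset (by simp)
      ((zeroAt_congr (v0 3) (v0 4)).mono (by simp) (by simp))
  · have h : CProof EPA [zeroBelow (v0 3), ltF (v0 4) (v0 3)] [zeroAt (v0 4)] :=
      allL_self (impL (of_mem (ltF (v0 4) (v0 3)) (by simp) (by simp))
        (of_mem (zeroAt (v0 4)) (by simp) (by simp)))
    exact h.mono (by simp) (by simp)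

theorem minimizationF_succ (htc : tch.Closed) (hspec : CProof EPA [] [chSpec tch]) :
    CProof EPA [minimizationF tch] [(minimizationF tch).substTm 3 (Tm.succ.app (v0 3))] := by
  show CProof EPA _ [(zeroBelow (Tm.succ.app (v0 3))).or (existsAat tch)]
  refine orL (orR (cut_shared (A := zeroAt (v0 3)) ?_ (zeroBelow_succ_of_zeroAt htc)))
    (orR (of_mem (existsAat tch) (by simp) (by simp)))
  exact (zeroAt_or_existsAat_of_zeroBelow hspec).mono (by simp) (by simp)

theorem all_minimizationF (htc : tch.Closed) (hspec : CProof EPA [] [chSpec tch]) :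
    CProof EPA [] [.all 3 𝕆 (minimizationF tch)] :=
  EPA.induction _ 3 ⟨.inr ⟨by simp [Tm.fvars], .inr ⟨by simp [Tm.fvars, Tm.maxVar], trivial⟩,
    trivial⟩, .inl (by simp)⟩ (minimizationF_zero htc) (minimizationF_succ htc hspec)

theorem forall_existsAat_of_halts (htc : tch.Closed) (hspec : CProof EPA [] [chSpec tch]) :
    CProof EPA [haltsF (.var 0 Ty1) (.var 1 Ty1)] [.all 2 𝕆 (existsAat tch)] := by
  refine allR (by simp [haltsF, CForm.fvars, Tm.maxVar]) (by simp) ?_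
  show CProof EPA [.all 2 𝕆 (.ex 3 𝕆 (zeroAt (v0 3)).not)] _
  refine allL_self (exL (by simp) (by simp [existsAat, CForm.fvars]) (notL ?_))
  refine (all_minimizationF htc hspec).of_all.cut_of_subset (List.nil_subset _) (orL ?_ ?_)
  · exact zeroAt_or_existsAat_of_zeroBelow hspec
  · exact of_mem (existsAat tch) (by simp) (by simp)

end Minimization

theorem halts_implies_forall_exists_Aat
    (tch : Tm (Ty1 ⤳ Ty1 ⤳ 𝕆 ⤳ 𝕆 ⤳ 𝕆)) (htc : tch.Closed)
    (hspec : CProof EPA [] [chSpec tch]) :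
    LProof false false EPA
      [((haltsF (Tm.var 0 Ty1) (Tm.var 1 Ty1)).emb).neg,
        (CForm.all 2 𝕆 (.ex 3 𝕆
          (aAt tch (.var 0 Ty1) (.var 1 Ty1) (v0 2) (v0 3)))).emb] :=
  (forall_existsAat_of_halts htc hspec).toLProof

end WR
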